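/- arXiv:1911.04321 — 8 statements merged into one kernel-verified Lean document; each statement's English description precedes it below -/
import Mathlib

section
/- Let X be a topological space and δ an extended semidistance on X. Let f, g, χ : X → ℝ be bounded continuous functions which are δ-Lipschitz on X, with 0 ≤ χ(x) ≤ 1 for all x. Then for every x ∈ X: (i) lip_δ(αf + βg)(x) ≤ |α|·lip_δ f(x) + |β|·lip_δ g(x) for all α, β ∈ ℝ; (ii) lip_δ(f·g)(x) ≤ |f(x)|·lip_δ g(x) + |g(x)|·lip_δ f(x); (iii) lip_δ((1−χ)f + χg)(x) ≤ (1−χ(x))·lip_δ f(x) + χ(x)·lip_δ g(x) + lip_δ χ(x)·|f(x) − g(x)|; (iv) for every continuously differentiable φ : ℝ → ℝ, lip_δ(φ∘f)(x) = |φ'(f(x))|·lip_δ f(x). -/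
/-!
Write `D_f y z = |f y - f z|`. The Lipschitz constant of `f` on `U` is the least `L` with
`D_f ≤ L * δ` on `U`; this makes sense for any gauge `D`, and it is monotone, subadditive and
positively homogeneous in `D`. Passing to the infimum over neighbourhoods of `x` keeps these
properties, and monotonicity then only needs to hold near `(x, x)`. Each rule therefore reduces
to a pointwise bound `|F y - F z| ≤ ∑ i, c i (y, z) * |f i y - f i z|` near `(x, x)`: an algebraic
identity for linear and convex combinations and products, and strict differentiability of `φ` at
`f x` (in both directions) for compositions. Since the coefficients are continuous at `(x, x)`,
shrinking the neighbourhood replaces `c i (y, z)` by `c i (x, x)`.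
-/

open Filter Set Topology
open scoped ENNReal

/-- The Lipschitz constant of `f` on the set `U` with respect to the extended
semidistance `δ`. -/
noncomputable def eLip {X : Type*} (δ : X → X → ℝ≥0∞) (f : X → ℝ) (U : Set X) : ℝ≥0∞ :=
  sInf {L : ℝ≥0∞ | ∀ y ∈ U, ∀ z ∈ U, ENNReal.ofReal |f y - f z| ≤ L * δ y z}

/-- The asymptotic Lipschitz constant of `f` at the point `x`. -/
noncomputable def asympLip {X : Type*} [TopologicalSpace X] (δ : X → X → ℝ≥0∞)
    (f : X → ℝ) (x : X) : ℝ≥0∞ :=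
  ⨅ U ∈ {U : Set X | IsOpen U ∧ x ∈ U}, eLip δ f U

section Gauge

variable {X : Type*} (δ : X → X → ℝ≥0∞)

/-- `eLip δ f = eLipGauge δ (fun y z => ENNReal.ofReal |f y - f z|)` by definition. -/
noncomputable def eLipGauge (D : X → X → ℝ≥0∞) (U : Set X) : ℝ≥0∞ :=
  sInf {L : ℝ≥0∞ | ∀ y ∈ U, ∀ z ∈ U, D y z ≤ L * δ y z}

variable {δ}

lemma eLipGauge_mono_set {D : X → X → ℝ≥0∞} {U V : Set X} (hUV : U ⊆ V) :
    eLipGauge δ D U ≤ eLipGauge δ D V :=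
  sInf_le_sInf fun _ hL y hy z hz => hL y (hUV hy) z (hUV hz)

lemma eLipGauge_mono {D D' : X → X → ℝ≥0∞} {U : Set X}
    (h : ∀ y ∈ U, ∀ z ∈ U, D y z ≤ D' y z) : eLipGauge δ D U ≤ eLipGauge δ D' U :=
  sInf_le_sInf fun _ hL y hy z hz => (h y hy z hz).trans (hL y hy z hz)

lemma eLipGauge_zero (U : Set X) : eLipGauge δ 0 U = 0 :=
  nonpos_iff_eq_zero.1 <| sInf_le fun _ _ _ _ => by simp

lemma eLipGauge_add_le (D₁ D₂ : X → X → ℝ≥0∞) (U : Set X) :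
    eLipGauge δ (D₁ + D₂) U ≤ eLipGauge δ D₁ U + eLipGauge δ D₂ U := by
  unfold eLipGauge
  rw [ENNReal.sInf_add]
  refine le_iInf₂ fun L₁ hL₁ => ?_
  rw [ENNReal.add_sInf]
  refine le_iInf₂ fun L₂ hL₂ => sInf_le fun y hy z hz => ?_
  rw [add_mul]
  exact add_le_add (hL₁ y hy z hz) (hL₂ y hy z hz)

lemma eLipGauge_smul_le {c : ℝ≥0∞} (hc : c ≠ ⊤) (D : X → X → ℝ≥0∞) (U : Set X) :
    eLipGauge δ (c • D) U ≤ c * eLipGauge δ D U := by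
  rcases eq_or_ne c 0 with rfl | hc₀
  · simp [eLipGauge_zero]
  unfold eLipGauge
  conv_rhs => rw [sInf_eq_iInf]
  simp_rw [ENNReal.mul_iInf_of_ne hc₀ hc]
  refine le_iInf₂ fun L hL => sInf_le fun y hy z hz => ?_
  rw [Pi.smul_apply, Pi.smul_apply, smul_eq_mul, mul_assoc]
  gcongr; exact hL y hy z hz

variable [TopologicalSpace X]

variable (δ) in
noncomputable def asympLipGauge (D : X → X → ℝ≥0∞) (x : X) : ℝ≥0∞ :=
  ⨅ U ∈ {U : Set X | IsOpen U ∧ x ∈ U}, eLipGauge δ D U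

lemma asympLipGauge_le_eLipGauge (D : X → X → ℝ≥0∞) {U : Set X} {x : X} (hU : IsOpen U)
    (hx : x ∈ U) : asympLipGauge δ D x ≤ eLipGauge δ D U :=
  iInf₂_le U ⟨hU, hx⟩

lemma asympLipGauge_mono_of_eventually {D D' : X → X → ℝ≥0∞} {x : X}
    (h : ∀ᶠ p in 𝓝 (x, x), D p.1 p.2 ≤ D' p.1 p.2) :
    asympLipGauge δ D x ≤ asympLipGauge δ D' x := by
  rw [nhds_prod_eq] at h
  obtain ⟨V, hV, hVV⟩ := mem_prod_self_iff.1 h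
  refine le_iInf₂ fun U ⟨hU, hxU⟩ => ?_
  calc asympLipGauge δ D x ≤ eLipGauge δ D (U ∩ interior V) :=
        asympLipGauge_le_eLipGauge D (hU.inter isOpen_interior)
          ⟨hxU, mem_interior_iff_mem_nhds.2 hV⟩
    _ ≤ eLipGauge δ D' (U ∩ interior V) := eLipGauge_mono fun y hy z hz =>
        hVV (mk_mem_prod (interior_subset hy.2) (interior_subset hz.2))
    _ ≤ eLipGauge δ D' U := eLipGauge_mono_set inter_subset_left

lemma asympLipGauge_zero (x : X) : asympLipGauge δ 0 x = 0 :=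
  nonpos_iff_eq_zero.1 <|
    (asympLipGauge_le_eLipGauge 0 isOpen_univ (mem_univ x)).trans (eLipGauge_zero _).le

lemma asympLipGauge_add_le (D₁ D₂ : X → X → ℝ≥0∞) (x : X) :
    asympLipGauge δ (D₁ + D₂) x ≤ asympLipGauge δ D₁ x + asympLipGauge δ D₂ x :=
  ENNReal.le_iInf₂_add_iInf₂ fun U₁ ⟨hU₁, hx₁⟩ U₂ ⟨hU₂, hx₂⟩ =>
    calc asympLipGauge δ (D₁ + D₂) x ≤ eLipGauge δ (D₁ + D₂) (U₁ ∩ U₂) :=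
          asympLipGauge_le_eLipGauge _ (hU₁.inter hU₂) ⟨hx₁, hx₂⟩
      _ ≤ eLipGauge δ D₁ (U₁ ∩ U₂) + eLipGauge δ D₂ (U₁ ∩ U₂) := eLipGauge_add_le _ _ _
      _ ≤ eLipGauge δ D₁ U₁ + eLipGauge δ D₂ U₂ := add_le_add
          (eLipGauge_mono_set inter_subset_left) (eLipGauge_mono_set inter_subset_right)

lemma asympLipGauge_smul_le {c : ℝ≥0∞} (hc : c ≠ ⊤) (D : X → X → ℝ≥0∞) (x : X) :
    asympLipGauge δ (c • D) x ≤ c * asympLipGauge δ D x := by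
  rcases eq_or_ne c 0 with rfl | hc₀
  · simp [asympLipGauge_zero]
  unfold asympLipGauge
  simp_rw [ENNReal.mul_iInf_of_ne hc₀ hc]
  exact le_iInf₂ fun U hU => (iInf₂_le U hU).trans (eLipGauge_smul_le hc D U)

lemma asympLipGauge_sum_smul_le {ι : Type*} (s : Finset ι) (c : ι → ℝ≥0∞) (hc : ∀ i, c i ≠ ⊤)
    (D : ι → X → X → ℝ≥0∞) (x : X) :
    asympLipGauge δ (∑ i ∈ s, c i • D i) x ≤ ∑ i ∈ s, c i * asympLipGauge δ (D i) x :=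
  (Finset.le_sum_of_subadditive (asympLipGauge δ · x) (asympLipGauge_zero x).le
    (asympLipGauge_add_le · · x) s _).trans
    (Finset.sum_le_sum fun i _ => asympLipGauge_smul_le (hc i) (D i) x)

end Gauge

section AsymptoticLipschitz

variable {X : Type*} [TopologicalSpace X] {δ : X → X → ℝ≥0∞}

lemma asympLip_le_eLip (f : X → ℝ) {U : Set X} {x : X} (hU : IsOpen U) (hx : x ∈ U) :
    asympLip δ f x ≤ eLip δ f U :=
  asympLipGauge_le_eLipGauge _ hU hx

lemma asympLip_ne_top {f : X → ℝ} (hf : eLip δ f univ ≠ ⊤) (x : X) : asympLip δ f x ≠ ⊤ :=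
  ne_top_of_le_ne_top hf (asympLip_le_eLip f isOpen_univ (mem_univ x))

lemma asympLip_le_sum_of_eventually {ι : Type*} [Fintype ι] {F : X → ℝ} {f : ι → X → ℝ}
    {c : ι → ℝ} (hc : ∀ i, 0 ≤ c i) {x : X}
    (h : ∀ᶠ p in 𝓝 (x, x), |F p.1 - F p.2| ≤ ∑ i, c i * |f i p.1 - f i p.2|) :
    asympLip δ F x ≤ ∑ i, ENNReal.ofReal (c i) * asympLip δ (f i) x := by
  refine (asympLipGauge_mono_of_eventually (D' := ∑ i, ENNReal.ofReal (c i) •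
    fun y z => ENNReal.ofReal |f i y - f i z|) ?_).trans
      (asympLipGauge_sum_smul_le _ _ (fun _ => ENNReal.ofReal_ne_top) _ x)
  filter_upwards [h] with p hp
  simp only [Finset.sum_apply, Pi.smul_apply, smul_eq_mul]
  calc ENNReal.ofReal |F p.1 - F p.2|
      ≤ ENNReal.ofReal (∑ i, c i * |f i p.1 - f i p.2|) := ENNReal.ofReal_le_ofReal hp
    _ = ∑ i, ENNReal.ofReal (c i) * ENNReal.ofReal |f i p.1 - f i p.2| := by
      rw [ENNReal.ofReal_sum_of_nonneg fun i _ => mul_nonneg (hc i) (abs_nonneg _)]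
      simp_rw [ENNReal.ofReal_mul (hc _)]

lemma asympLip_le_mul_of_eventually {F f : X → ℝ} {c : ℝ} (hc : 0 ≤ c) {x : X}
    (h : ∀ᶠ p in 𝓝 (x, x), |F p.1 - F p.2| ≤ c * |f p.1 - f p.2|) :
    asympLip δ F x ≤ ENNReal.ofReal c * asympLip δ f x := by
  simpa using asympLip_le_sum_of_eventually (ι := Unit) (f := fun _ => f) (c := fun _ => c)
    (fun _ => hc) (by simpa using h)

lemma asympLip_le_sum_of_continuousAt {ι : Type*} [Fintype ι] {F : X → ℝ} {f : ι → X → ℝ}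
    {c : ι → X × X → ℝ} {x : X} (hc : ∀ i, ContinuousAt (c i) (x, x))
    (hc₀ : ∀ i, 0 ≤ c i (x, x)) (hf : ∀ i, asympLip δ (f i) x ≠ ⊤)
    (h : ∀ᶠ p in 𝓝 (x, x), |F p.1 - F p.2| ≤ ∑ i, c i p * |f i p.1 - f i p.2|) :
    asympLip δ F x ≤ ∑ i, ENNReal.ofReal (c i (x, x)) * asympLip δ (f i) x := by
  have hε : ∀ ε > 0, asympLip δ F x ≤
      ∑ i, ENNReal.ofReal (c i (x, x) + ε) * asympLip δ (f i) x := fun ε hε =>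
    asympLip_le_sum_of_eventually (fun i => by linarith [hc₀ i]) <| by
      filter_upwards [h, eventually_all.2 fun i =>
        (hc i).eventually_lt continuousAt_const (lt_add_of_pos_right _ hε)] with p hp hcp
      exact hp.trans <| Finset.sum_le_sum fun i _ =>
        mul_le_mul_of_nonneg_right (hcp i).le (abs_nonneg _)
  have hcont : Continuous fun ε : ℝ =>
      ∑ i, ENNReal.ofReal (c i (x, x) + ε) * asympLip δ (f i) x :=
    continuous_finsetSum _ fun i _ => (ENNReal.continuous_mul_const (hf i)).comp <|
      ENNReal.continuous_ofReal.comp (continuous_const.add continuous_id)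
  simpa using ge_of_tendsto (hcont.continuousWithinAt (s := Ioi 0) (x := 0))
    (eventually_nhdsWithin_of_forall hε)

lemma HasStrictDerivAt.eventually_abs_comp_sub_sub_le {f : X → ℝ} {φ : ℝ → ℝ} {φ' : ℝ} {x : X}
    (hf : ContinuousAt f x) (hφ : HasStrictDerivAt φ φ' (f x)) {ε : ℝ} (hε : 0 < ε) :
    ∀ᶠ p in 𝓝 (x, x), |φ (f p.1) - φ (f p.2) - φ' * (f p.1 - f p.2)| ≤ ε * |f p.1 - f p.2| := by
  have hpair : Tendsto (fun p : X × X => (f p.1, f p.2)) (𝓝 (x, x)) (𝓝 (f x, f x)) :=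
    (hf.prodMap' hf).tendsto
  filter_upwards [hpair.eventually ((hasDerivAtFilter_iff_isLittleO.1 hφ).def hε)] with p hp
  simpa [Real.norm_eq_abs, mul_comm] using hp

end AsymptoticLipschitz

section Rules

variable {X : Type*} [TopologicalSpace X] {δ : X → X → ℝ≥0∞}

lemma asympLip_mul_add_mul_le (α β : ℝ) (f g : X → ℝ) (x : X) :
    asympLip δ (fun y => α * f y + β * g y) x ≤
      ENNReal.ofReal |α| * asympLip δ f x + ENNReal.ofReal |β| * asympLip δ g x := by
  have key : ∀ y z, |α * f y + β * g y - (α * f z + β * g z)| ≤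
      |α| * |f y - f z| + |β| * |g y - g z| := fun y z => by
    rw [show α * f y + β * g y - (α * f z + β * g z) = α * (f y - f z) + β * (g y - g z) by ring,
      ← abs_mul, ← abs_mul]
    exact abs_add_le _ _
  simpa [Fin.sum_univ_two] using asympLip_le_sum_of_eventually (δ := δ) (f := ![f, g])
    (c := ![|α|, |β|]) (Fin.forall_fin_two.2 ⟨abs_nonneg α, abs_nonneg β⟩)
    (Eventually.of_forall fun p => by simpa [Fin.sum_univ_two] using key p.1 p.2)

lemma asympLip_mul_le {f g : X → ℝ} {x : X} (hf : ContinuousAt f x) (hg : ContinuousAt g x)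
    (hfl : asympLip δ f x ≠ ⊤) (hgl : asympLip δ g x ≠ ⊤) :
    asympLip δ (fun y => f y * g y) x ≤
      ENNReal.ofReal |f x| * asympLip δ g x + ENNReal.ofReal |g x| * asympLip δ f x := by
  have key : ∀ y z, |f y * g y - f z * g z| ≤ |f y| * |g y - g z| + |g z| * |f y - f z| :=
    fun y z => by
      rw [show f y * g y - f z * g z = f y * (g y - g z) + g z * (f y - f z) by ring,
        ← abs_mul, ← abs_mul]
      exact abs_add_le _ _
  simpa [Fin.sum_univ_two] using asympLip_le_sum_of_continuousAt (f := ![g, f])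
    (c := ![fun p => |f p.1|, fun p => |g p.2|])
    (Fin.forall_fin_two.2 ⟨hf.fst'.abs, hg.snd'.abs⟩)
    (Fin.forall_fin_two.2 ⟨abs_nonneg _, abs_nonneg _⟩) (Fin.forall_fin_two.2 ⟨hgl, hfl⟩)
    (Eventually.of_forall fun p => by simpa [Fin.sum_univ_two] using key p.1 p.2)

lemma asympLip_one_sub_mul_add_mul_le {f g χ : X → ℝ} {x : X} (hf : ContinuousAt f x)
    (hg : ContinuousAt g x) (hχ : ContinuousAt χ x) (hfl : asympLip δ f x ≠ ⊤)
    (hgl : asympLip δ g x ≠ ⊤) (hχl : asympLip δ χ x ≠ ⊤) :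
    asympLip δ (fun y => (1 - χ y) * f y + χ y * g y) x ≤
      ENNReal.ofReal |1 - χ x| * asympLip δ f x + ENNReal.ofReal |χ x| * asympLip δ g x
        + asympLip δ χ x * ENNReal.ofReal |f x - g x| := by
  have key : ∀ y z, |(1 - χ y) * f y + χ y * g y - ((1 - χ z) * f z + χ z * g z)| ≤
      |1 - χ y| * |f y - f z| + |χ y| * |g y - g z| + |g z - f z| * |χ y - χ z| := fun y z => by
    rw [show (1 - χ y) * f y + χ y * g y - ((1 - χ z) * f z + χ z * g z) =
        (1 - χ y) * (f y - f z) + χ y * (g y - g z) + (g z - f z) * (χ y - χ z) by ring,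
      ← abs_mul, ← abs_mul, ← abs_mul]
    exact abs_add_three _ _ _
  have h := asympLip_le_sum_of_continuousAt (δ := δ)
    (F := fun y => (1 - χ y) * f y + χ y * g y) (f := ![f, g, χ])
    (c := ![fun p => |1 - χ p.1|, fun p => |χ p.1|, fun p => |g p.2 - f p.2|])
    (Fin.forall_fin_succ.2 ⟨(continuousAt_const.sub hχ.fst').abs,
      Fin.forall_fin_two.2 ⟨hχ.fst'.abs, (hg.snd'.sub hf.snd').abs⟩⟩)
    (fun i => by fin_cases i <;> exact abs_nonneg _)
    (Fin.forall_fin_succ.2 ⟨hfl, Fin.forall_fin_two.2 ⟨hgl, hχl⟩⟩)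
    (Eventually.of_forall fun p => by simpa [Fin.sum_univ_three] using key p.1 p.2)
  simpa [Fin.sum_univ_three, abs_sub_comm (g x), mul_comm (asympLip δ χ x)] using h

lemma asympLip_comp_eq_of_hasStrictDerivAt {f : X → ℝ} {φ : ℝ → ℝ} {φ' : ℝ} {x : X}
    (hf : ContinuousAt f x) (hφ : HasStrictDerivAt φ φ' (f x)) (hfl : asympLip δ f x ≠ ⊤) :
    asympLip δ (fun y => φ (f y)) x = ENNReal.ofReal |φ'| * asympLip δ f x := by
  have upper : ∀ c > |φ'|, asympLip δ (fun y => φ (f y)) x ≤ ENNReal.ofReal c * asympLip δ f x :=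
    fun c hc => asympLip_le_mul_of_eventually (by linarith [abs_nonneg φ']) <| by
      filter_upwards [hφ.eventually_abs_comp_sub_sub_le hf (sub_pos.2 hc)] with p hp
      have := abs_sub_abs_le_abs_sub (φ (f p.1) - φ (f p.2)) (φ' * (f p.1 - f p.2))
      rw [abs_mul] at this
      linarith
  have lower :
      ∀ c < |φ'|, ENNReal.ofReal c * asympLip δ f x ≤ asympLip δ (fun y => φ (f y)) x := by
    intro c hc
    rcases le_or_gt c 0 with hc₀ | hc₀
    · simp [ENNReal.ofReal_of_nonpos hc₀]
    have h : asympLip δ f x ≤ ENNReal.ofReal c⁻¹ * asympLip δ (fun y => φ (f y)) x :=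
      asympLip_le_mul_of_eventually (inv_nonneg.2 hc₀.le) <| by
        filter_upwards [hφ.eventually_abs_comp_sub_sub_le hf (sub_pos.2 hc)] with p hp
        have := abs_sub_abs_le_abs_sub (φ' * (f p.1 - f p.2)) (φ (f p.1) - φ (f p.2))
        rw [abs_mul, abs_sub_comm (φ' * _)] at this
        rw [le_inv_mul_iff₀ hc₀]
        linarith
    calc ENNReal.ofReal c * asympLip δ f x
        ≤ ENNReal.ofReal c * (ENNReal.ofReal c⁻¹ * asympLip δ (fun y => φ (f y)) x) := by gcongr
      _ = asympLip δ (fun y => φ (f y)) x := by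
        rw [← mul_assoc, ← ENNReal.ofReal_mul hc₀.le, mul_inv_cancel₀ hc₀.ne', ENNReal.ofReal_one,
          one_mul]
  have hcont : Continuous fun c : ℝ => ENNReal.ofReal c * asympLip δ f x :=
    (ENNReal.continuous_mul_const hfl).comp ENNReal.continuous_ofReal
  exact le_antisymm
    (ge_of_tendsto (hcont.continuousWithinAt (s := Ioi |φ'|))
      (eventually_nhdsWithin_of_forall upper))
    (le_of_tendsto (hcont.continuousWithinAt (s := Iio |φ'|))
      (eventually_nhdsWithin_of_forall lower))

end Rules

theorem stmt0_general {X : Type*} [TopologicalSpace X]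
    (δ : X → X → ℝ≥0∞)
    (f g χ : X → ℝ)
    (hf : Continuous f) (hg : Continuous g) (hχ : Continuous χ)
    (hfl : eLip δ f Set.univ ≠ ⊤) (hgl : eLip δ g Set.univ ≠ ⊤)
    (hχl : eLip δ χ Set.univ ≠ ⊤)
    (hχ01 : ∀ x, 0 ≤ χ x ∧ χ x ≤ 1)
    (x : X) :
    (∀ α β : ℝ,
      asympLip δ (fun y => α * f y + β * g y) x ≤
        ENNReal.ofReal |α| * asympLip δ f x + ENNReal.ofReal |β| * asympLip δ g x)
    ∧ (asympLip δ (fun y => f y * g y) x ≤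
        ENNReal.ofReal |f x| * asympLip δ g x + ENNReal.ofReal |g x| * asympLip δ f x)
    ∧ (asympLip δ (fun y => (1 - χ y) * f y + χ y * g y) x ≤
        ENNReal.ofReal (1 - χ x) * asympLip δ f x + ENNReal.ofReal (χ x) * asympLip δ g x
          + asympLip δ χ x * ENNReal.ofReal |f x - g x|)
    ∧ (∀ φ : ℝ → ℝ, ContDiff ℝ 1 φ →
        asympLip δ (fun y => φ (f y)) x = ENNReal.ofReal |deriv φ (f x)| * asympLip δ f x) := by
  have hfx := asympLip_ne_top hfl x
  have hgx := asympLip_ne_top hgl x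
  refine ⟨fun α β => asympLip_mul_add_mul_le α β f g x,
    asympLip_mul_le hf.continuousAt hg.continuousAt hfx hgx, ?_,
    fun φ hφ => asympLip_comp_eq_of_hasStrictDerivAt hf.continuousAt
      (hφ.contDiffAt.hasStrictDerivAt one_ne_zero) hfx⟩
  have h := asympLip_one_sub_mul_add_mul_le hf.continuousAt hg.continuousAt hχ.continuousAt hfx hgx
    (asympLip_ne_top hχl x)
  rwa [abs_of_nonneg (sub_nonneg.2 (hχ01 x).2), abs_of_nonneg (hχ01 x).1] at h

theorem stmt0 {X : Type*} [TopologicalSpace X]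
    (δ : X → X → ℝ≥0∞)
    (hδ0 : ∀ x, δ x x = 0)
    (hδsymm : ∀ x y, δ x y = δ y x)
    (hδtri : ∀ x y z, δ x z ≤ δ x y + δ y z)
    (f g χ : X → ℝ)
    (hf : Continuous f) (hg : Continuous g) (hχ : Continuous χ)
    (hfb : ∃ C, ∀ x, |f x| ≤ C) (hgb : ∃ C, ∀ x, |g x| ≤ C) (hχb : ∃ C, ∀ x, |χ x| ≤ C)
    (hfl : eLip δ f Set.univ ≠ ⊤) (hgl : eLip δ g Set.univ ≠ ⊤)
    (hχl : eLip δ χ Set.univ ≠ ⊤)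
    (hχ01 : ∀ x, 0 ≤ χ x ∧ χ x ≤ 1)
    (x : X) :
    (∀ α β : ℝ,
      asympLip δ (fun y => α * f y + β * g y) x ≤
        ENNReal.ofReal |α| * asympLip δ f x + ENNReal.ofReal |β| * asympLip δ g x)
    ∧ (asympLip δ (fun y => f y * g y) x ≤
        ENNReal.ofReal |f x| * asympLip δ g x + ENNReal.ofReal |g x| * asympLip δ f x)
    ∧ (asympLip δ (fun y => (1 - χ y) * f y + χ y * g y) x ≤
        ENNReal.ofReal (1 - χ x) * asympLip δ f x + ENNReal.ofReal (χ x) * asympLip δ g x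
          + asympLip δ χ x * ENNReal.ofReal |f x - g x|)
    ∧ (∀ φ : ℝ → ℝ, ContDiff ℝ 1 φ →
        asympLip δ (fun y => φ (f y)) x = ENNReal.ofReal |deriv φ (f x)| * asympLip δ f x) :=
  stmt0_general δ f g χ hf hg hχ hfl hgl hχl hχ01 x
end

section
/- Let X be a set and A a (not necessarily unital) subalgebra of the algebra of real-valued functions on X whose elements are bounded, and let f¹, …, f^M ∈ A with pointwise maximum f := f¹ ∨ ⋯ ∨ f^M. Then for every ε > 0 there exists f_ε ∈ A such that min_{1≤m≤M} f^m(x) ≤ f_ε(x) ≤ max_{1≤m≤M} f^m(x) for every x ∈ X and sup_{x∈X} |f_ε(x) − f(x)| ≤ ε; moreover, if δ is an extended semidistance on X, S ⊆ X and L ∈ [0,∞) are such that Lip(f^m, S, δ) ≤ L for every 1 ≤ m ≤ M, then f_ε can be chosen so that in addition Lip(f_ε, S, δ) ≤ L. -/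
/-!
Approximate `|t|` on `[-D, D]` by a polynomial `q` with `q 0 = 0`, `|q'| ≤ 1` and
`|t| - ε ≤ q t`: take for `q'` a Newton–Schulz iterate `w ↦ (3w - w³)/2` started at `w = t`, which
approximates the sign function while staying in `[-1, 1]`. Then `(u + v + q (u - v)) / 2` lies in
the algebra, between `min u v` and `max u v`, within `ε` of `max u v`, and each of its increments is
bounded by the larger increment of `u` and `v`. Folding this over `f¹, …, f^M` gives `f_ε`; since
every increment `|f_ε y - f_ε z|` is dominated by some `|f^m y - f^m z|`, the Lipschitz bound passes
to `f_ε`.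
-/

open scoped ENNReal NNReal

section AbsApproximation

open Polynomial Set

noncomputable def polyAntideriv (p : ℝ[X]) : ℝ[X] :=
  p.sum fun n a => C (a / (n + 1)) * X ^ (n + 1)

lemma derivative_polyAntideriv (p : ℝ[X]) : derivative (polyAntideriv p) = p := by
  rw [polyAntideriv, Polynomial.sum, map_sum]
  conv_rhs => rw [← p.sum_C_mul_X_pow_eq]
  refine Finset.sum_congr rfl fun n _ => ?_
  rw [derivative_C_mul_X_pow, Nat.add_sub_cancel]
  congr 2
  push_cast
  field_simp

lemma eval_polyAntideriv_zero (p : ℝ[X]) : (polyAntideriv p).eval 0 = 0 := by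
  simp [polyAntideriv, Polynomial.sum, eval_finsetSum]

lemma polyAntideriv_comp_neg_X {p : ℝ[X]} (hp : p.comp (-X) = -p) :
    (polyAntideriv p).comp (-X) = polyAntideriv p := by
  set P := polyAntideriv p
  have hderiv : derivative (P.comp (-X) - P) = 0 := by
    simp [P, derivative_comp, derivative_polyAntideriv, hp]
  have hcoeff : (P.comp (-X) - P).coeff 0 = 0 := by
    simp [coeff_zero_eq_eval_zero]
  rw [← sub_eq_zero, eq_C_of_derivative_eq_zero hderiv, hcoeff, map_zero]

noncomputable def signPoly : ℕ → ℝ[X]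
  | 0 => X
  | k + 1 => C (3 / 2) * signPoly k - C (1 / 2) * signPoly k ^ 3

lemma signPoly_comp_neg_X (k : ℕ) : (signPoly k).comp (-X) = -signPoly k := by
  induction k with
  | zero => simp [signPoly]
  | succ k ih => simp [signPoly, ih]; ring

lemma signPoly_bounds (k : ℕ) {u : ℝ} (h0 : 0 ≤ u) (h1 : u ≤ 1) :
    u ≤ (signPoly k).eval u ∧ (signPoly k).eval u ≤ 1 ∧
      1 - (signPoly k).eval u ≤ (1 - u / 2) ^ k := by
  induction k with
  | zero => simp [signPoly]; constructor <;> linarith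
  | succ k ih =>
    obtain ⟨hlow, hup, herr⟩ := ih
    set w := (signPoly k).eval u
    have hw : (signPoly (k + 1)).eval u = 3 / 2 * w - 1 / 2 * w ^ 3 := by simp [signPoly, w]
    have hw0 : 0 ≤ w := h0.trans hlow
    rw [hw]
    refine ⟨?_, ?_, ?_⟩
    · nlinarith [mul_nonneg (mul_nonneg hw0 (sub_nonneg.2 hup)) (by linarith : (0:ℝ) ≤ 1 + w)]
    · nlinarith [mul_nonneg (mul_nonneg (sub_nonneg.2 hup) (sub_nonneg.2 hup))
        (by linarith : (0:ℝ) ≤ w + 2)]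
    · have hfactor : 1 - (3 / 2 * w - 1 / 2 * w ^ 3) = (1 - w) * (1 - w / 2 - w ^ 2 / 2) := by ring
      have hstep : 1 - w / 2 - w ^ 2 / 2 ≤ 1 - u / 2 := by nlinarith
      rw [hfactor, pow_succ]
      exact mul_le_mul herr hstep (by nlinarith) (pow_nonneg (by linarith) _)

lemma abs_eval_signPoly_le_one (k : ℕ) {u : ℝ} (hu : |u| ≤ 1) : |(signPoly k).eval u| ≤ 1 := by
  have key : ∀ u : ℝ, 0 ≤ u → u ≤ 1 → |(signPoly k).eval u| ≤ 1 := fun u h0 h1 => by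
    obtain ⟨hlow, hup, -⟩ := signPoly_bounds k h0 h1
    rw [abs_of_nonneg (h0.trans hlow)]
    exact hup
  rcases le_total 0 u with hu0 | hu0
  · exact key u hu0 ((le_abs_self u).trans hu)
  · have := key (-u) (by linarith) (by linarith [neg_abs_le u])
    have hodd := congrArg (eval (-u)) (signPoly_comp_neg_X k)
    simp only [eval_comp, eval_neg, eval_X, neg_neg] at hodd
    rwa [hodd, abs_neg]

lemma Polynomial.monotoneOn_eval_of_derivative_nonneg {p : ℝ[X]} {s : Set ℝ} (hs : Convex ℝ s)
    (h : ∀ u ∈ interior s, 0 ≤ (derivative p).eval u) : MonotoneOn (fun t => p.eval t) s :=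
  monotoneOn_of_deriv_nonneg hs p.continuous.continuousOn p.differentiable.differentiableOn
    fun u hu => by rw [Polynomial.deriv]; exact h u hu

noncomputable def absPoly (k : ℕ) : ℝ[X] := polyAntideriv (signPoly k)

lemma eval_absPoly_zero (k : ℕ) : (absPoly k).eval 0 = 0 := eval_polyAntideriv_zero _

lemma eval_absPoly_neg (k : ℕ) (t : ℝ) : (absPoly k).eval (-t) = (absPoly k).eval t := by
  simpa [absPoly] using congrArg (eval t) (polyAntideriv_comp_neg_X (signPoly_comp_neg_X k))

lemma abs_eval_absPoly_sub_le (k : ℕ) {s t : ℝ} (hs : |s| ≤ 1) (ht : |t| ≤ 1) :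
    |(absPoly k).eval s - (absPoly k).eval t| ≤ |s - t| := by
  have hbound : ∀ u ∈ Icc (-1 : ℝ) 1, ‖deriv (fun t => (absPoly k).eval t) u‖ ≤ 1 := by
    intro u hu
    rw [Polynomial.deriv, absPoly, derivative_polyAntideriv, Real.norm_eq_abs]
    exact abs_eval_signPoly_le_one k (abs_le.2 hu)
  simpa using (convex_Icc (-1 : ℝ) 1).norm_image_sub_le_of_norm_deriv_le
    (fun u _ => (absPoly k).differentiable u) hbound (abs_le.1 ht) (abs_le.1 hs)

lemma sub_eval_absPoly_le (k : ℕ) {s : ℝ} (h0 : 0 ≤ s) (h1 : s ≤ 1) :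
    s - (absPoly k).eval s ≤ 2 / (k + 1) := by
  -- `R` is the antiderivative of the bound `(1 - u / 2) ^ k` on `1 - signPoly k`
  set R : ℝ[X] := C (2 / ((k : ℝ) + 1)) * (1 - (1 - C (1 / 2 : ℝ) * X) ^ (k + 1))
  have hR : ∀ u, (derivative R).eval u = (1 - u / 2) ^ k := fun u => by
    simp [R, derivative_pow]
    field_simp
  have hmono : MonotoneOn (fun t => (R - X + absPoly k).eval t) (Icc 0 1) := by
    refine monotoneOn_eval_of_derivative_nonneg (convex_Icc 0 1) fun u hu => ?_
    rw [interior_Icc] at hu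
    have := (signPoly_bounds k hu.1.le hu.2.le).2.2
    simp only [derivative_add, derivative_sub, derivative_X, absPoly, derivative_polyAntideriv,
      eval_add, eval_sub, eval_one, hR]
    linarith
  have hcomp := hmono ⟨le_rfl, zero_le_one⟩ ⟨h0, h1⟩ h0
  have hR0 : R.eval 0 = 0 := by simp [R]
  have hRs : R.eval s ≤ 2 / (k + 1) := by
    have : 0 ≤ (1 - 1 / 2 * s) ^ (k + 1) := pow_nonneg (by linarith) _
    simp only [R, eval_mul, eval_C, eval_sub, eval_one, eval_pow, eval_X]
    nlinarith [show (0 : ℝ) ≤ 2 / (k + 1) by positivity]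
  simp only [eval_add, eval_sub, eval_X, hR0, eval_absPoly_zero, sub_zero, add_zero] at hcomp
  linarith

lemma abs_sub_eval_absPoly_le (k : ℕ) {s : ℝ} (hs : |s| ≤ 1) :
    |s| - (absPoly k).eval s ≤ 2 / (k + 1) := by
  have heven : (absPoly k).eval |s| = (absPoly k).eval s :=
    (abs_choice s).elim (fun h => by rw [h]) fun h => by rw [h, eval_absPoly_neg]
  simpa [heven] using sub_eval_absPoly_le k (abs_nonneg s) hs

theorem exists_polynomial_approx_abs {D ε : ℝ} (hD : 0 < D) (hε : 0 < ε) :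
    ∃ p : ℝ[X], p.eval 0 = 0 ∧
      (∀ s t, |s| ≤ D → |t| ≤ D → |p.eval s - p.eval t| ≤ |s - t|) ∧
      ∀ t, |t| ≤ D → |t| - p.eval t ≤ ε := by
  obtain ⟨k, hk⟩ := exists_nat_gt (2 * D / ε)
  have hkε : D * (2 / (k + 1)) ≤ ε := by
    rw [div_lt_iff₀ hε] at hk
    rw [mul_div_assoc', div_le_iff₀ (by positivity)]
    nlinarith
  have hscale : ∀ {t}, |t| ≤ D → |D⁻¹ * t| ≤ 1 := fun ht => by
    rw [abs_mul, abs_inv, abs_of_pos hD]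
    exact inv_mul_le_one_of_le₀ ht hD.le
  refine ⟨C D * (absPoly k).comp (C D⁻¹ * X), by simp [eval_absPoly_zero], ?_, ?_⟩
  · intro s t hs ht
    have := abs_eval_absPoly_sub_le k (hscale hs) (hscale ht)
    simp only [eval_mul, eval_C, eval_comp, eval_X, ← mul_sub, abs_mul, abs_of_pos hD,
      abs_inv] at this ⊢
    calc D * |eval (D⁻¹ * s) (absPoly k) - eval (D⁻¹ * t) (absPoly k)|
        ≤ D * (D⁻¹ * |s - t|) := by gcongr
      _ = |s - t| := by field_simp
  · intro t ht
    have := abs_sub_eval_absPoly_le k (hscale ht)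
    rw [abs_mul, abs_inv, abs_of_pos hD] at this
    simp only [eval_mul, eval_C, eval_comp, eval_X]
    calc |t| - D * eval (D⁻¹ * t) (absPoly k) = D * (D⁻¹ * |t| - eval (D⁻¹ * t) (absPoly k)) := by
          field_simp
      _ ≤ D * (2 / (k + 1)) := by gcongr
      _ ≤ ε := hkε

end AbsApproximation

/-- Equals `max u v` when `q = |·|`. -/
noncomputable def softMax (q : ℝ → ℝ) (u v : ℝ) : ℝ := (u + v) / 2 + q (u - v) / 2

section softMax

variable {q : ℝ → ℝ} {u v : ℝ}

lemma min_le_softMax (h : |q (u - v)| ≤ |u - v|) : min u v ≤ softMax q u v := by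
  rw [abs_le] at h
  rcases le_total u v with huv | huv
  · rw [min_eq_left huv, abs_of_nonpos (sub_nonpos.2 huv)] at *
    unfold softMax; linarith
  · rw [min_eq_right huv, abs_of_nonneg (sub_nonneg.2 huv)] at *
    unfold softMax; linarith

lemma softMax_le_max (h : |q (u - v)| ≤ |u - v|) : softMax q u v ≤ max u v := by
  rw [abs_le] at h
  rcases le_total u v with huv | huv
  · rw [max_eq_right huv, abs_of_nonpos (sub_nonpos.2 huv)] at *
    unfold softMax; linarith
  · rw [max_eq_left huv, abs_of_nonneg (sub_nonneg.2 huv)] at *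
    unfold softMax; linarith

lemma max_le_softMax_add {ε : ℝ} (h : |u - v| - q (u - v) ≤ 2 * ε) :
    max u v ≤ softMax q u v + ε := by
  rcases le_total u v with huv | huv
  · rw [max_eq_right huv, abs_of_nonpos (sub_nonpos.2 huv)] at *
    unfold softMax; linarith
  · rw [max_eq_left huv, abs_of_nonneg (sub_nonneg.2 huv)] at *
    unfold softMax; linarith

lemma abs_add_add_le_two_mul_max {a b e : ℝ} (he : |e| ≤ |a - b|) :
    |a + b + e| ≤ 2 * max |a| |b| := by
  have := le_max_left |a| |b|
  have := le_max_right |a| |b|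
  rw [abs_le] at he ⊢
  constructor <;> rcases abs_cases (a - b) with ⟨hab, _⟩ | ⟨hab, _⟩ <;>
    linarith [le_abs_self a, neg_abs_le a, le_abs_self b, neg_abs_le b]

/-- For `q` with `|q'| ≤ 1`, the partial derivatives `(1 ± q') / 2` of `softMax q` are
nonnegative and sum to `1`. -/
lemma abs_softMax_sub_softMax_le {u' v' : ℝ}
    (h : |q (u - v) - q (u' - v')| ≤ |(u - v) - (u' - v')|) :
    |softMax q u v - softMax q u' v'| ≤ max |u - u'| |v - v'| := by
  have key := abs_add_add_le_two_mul_max (a := u - u') (b := v - v')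
    (e := q (u - v) - q (u' - v')) (by convert h using 2; ring)
  have : softMax q u v - softMax q u' v' = (u - u' + (v - v') + (q (u - v) - q (u' - v'))) / 2 := by
    unfold softMax; ring
  rw [this, abs_div, abs_two]
  linarith

end softMax

open Polynomial in
lemma NonUnitalSubalgebra.polynomial_eval_mem {R X : Type*} [CommSemiring R]
    (A : NonUnitalSubalgebra R (X → R)) {p : R[X]} (hp : p.coeff 0 = 0) {f : X → R}
    (hf : f ∈ A) : (fun x => p.eval (f x)) ∈ A := by
  have hpow : ∀ n : ℕ, f ^ (n + 1) ∈ A := fun n => by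
    induction n with
    | zero => simpa using hf
    | succ n ih => rw [pow_succ]; exact mul_mem ih hf
  have hsum : (fun x => p.eval (f x)) = ∑ n ∈ p.support, p.coeff n • f ^ n := by
    ext x
    simp [eval_eq_sum, Polynomial.sum, Finset.sum_apply]
  rw [hsum]
  refine sum_mem fun n hn => ?_
  obtain ⟨m, rfl⟩ : ∃ m, n = m + 1 :=
    Nat.exists_eq_succ_of_ne_zero fun h0 => (mem_support_iff.1 hn) (h0 ▸ hp)
  exact SMulMemClass.smul_mem _ (hpow m)

section approximation

variable {X : Type*} (A : NonUnitalSubalgebra ℝ (X → ℝ))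

theorem exists_mem_approx_max (hAb : ∀ f ∈ A, ∃ C : ℝ, ∀ x, |f x| ≤ C) {u v : X → ℝ}
    (hu : u ∈ A) (hv : v ∈ A) {ε : ℝ} (hε : 0 < ε) :
    ∃ g ∈ A, (∀ x, min (u x) (v x) ≤ g x ∧ g x ≤ max (u x) (v x) ∧ max (u x) (v x) ≤ g x + ε) ∧
      ∀ y z, |g y - g z| ≤ max |u y - u z| |v y - v z| := by
  obtain ⟨C, hC⟩ := hAb (u - v) (sub_mem hu hv)
  have hbd : ∀ x, |u x - v x| ≤ |C| + 1 := fun x => (hC x).trans (by linarith [le_abs_self C])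
  obtain ⟨p, hp0, hpLip, hpErr⟩ :=
    exists_polynomial_approx_abs (D := |C| + 1) (by positivity) (by positivity : 0 < 2 * ε)
  have hpAbs : ∀ x, |p.eval (u x - v x)| ≤ |u x - v x| := fun x => by
    simpa [hp0] using hpLip (u x - v x) 0 (hbd x) (by simp; positivity)
  have hmem : (fun x => softMax p.eval (u x) (v x)) ∈ A := by
    have hpuv := A.polynomial_eval_mem (by rwa [Polynomial.coeff_zero_eq_eval_zero]) (sub_mem hu hv)
    have hsoft : (fun x => softMax p.eval (u x) (v x)) =
        (2⁻¹ : ℝ) • (u + v + fun x => p.eval ((u - v) x)) := by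
      ext x
      simp only [softMax, Pi.smul_apply, Pi.add_apply, Pi.sub_apply, smul_eq_mul]
      ring
    exact hsoft ▸ A.smul_mem _ (add_mem (add_mem hu hv) hpuv)
  refine ⟨_, hmem, fun x => ?_, fun y z => abs_softMax_sub_softMax_le (hpLip _ _ (hbd y) (hbd z))⟩
  exact ⟨min_le_softMax (hpAbs x), softMax_le_max (hpAbs x), max_le_softMax_add (hpErr _ (hbd x))⟩

theorem exists_mem_approx_sup (hAb : ∀ f ∈ A, ∃ C : ℝ, ∀ x, |f x| ≤ C) {ι : Type*}
    (F : ι → X → ℝ) {s : Finset ι} (hs : s.Nonempty) (hF : ∀ i ∈ s, F i ∈ A) :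
    ∀ ε > 0, ∃ g ∈ A,
      (∀ x, (∃ i ∈ s, F i x ≤ g x) ∧ (∃ i ∈ s, g x ≤ F i x) ∧ ∀ i ∈ s, F i x ≤ g x + ε) ∧
      ∀ y z, ∃ i ∈ s, |g y - g z| ≤ |F i y - F i z| := by
  induction hs using Finset.Nonempty.cons_induction with
  | singleton a =>
    intro ε hε
    refine ⟨F a, hF a (Finset.mem_singleton_self a), fun x => ?_, fun y z => ⟨a, by simp⟩⟩
    simpa using hε.le
  | cons a s _ _ ih =>
    intro ε hε
    obtain ⟨g₁, hg₁, hg₁x, hg₁yz⟩ :=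
      ih (fun i hi => hF i (Finset.mem_cons_of_mem hi)) (ε / 2) (half_pos hε)
    obtain ⟨g, hg, hgx, hgyz⟩ :=
      exists_mem_approx_max A hAb hg₁ (hF a (Finset.mem_cons_self a s)) (half_pos hε)
    refine ⟨g, hg, fun x => ?_, fun y z => ?_⟩
    · obtain ⟨⟨i, hi, hil⟩, ⟨j, hj, hju⟩, hsup⟩ := hg₁x x
      obtain ⟨hmin, hmax, herr⟩ := hgx x
      refine ⟨?_, ?_, fun k hk => ?_⟩
      · rcases min_choice (g₁ x) (F a x) with h | h <;> rw [h] at hmin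
        · exact ⟨i, Finset.mem_cons_of_mem hi, hil.trans hmin⟩
        · exact ⟨a, Finset.mem_cons_self a s, hmin⟩
      · rcases max_choice (g₁ x) (F a x) with h | h <;> rw [h] at hmax
        · exact ⟨j, Finset.mem_cons_of_mem hj, hmax.trans hju⟩
        · exact ⟨a, Finset.mem_cons_self a s, hmax⟩
      · rcases Finset.mem_cons.1 hk with rfl | hk
        · linarith [le_max_right (g₁ x) (F k x)]
        · linarith [hsup k hk, le_max_left (g₁ x) (F a x)]
    · have := hgyz y z
      rcases max_choice |g₁ y - g₁ z| |F a y - F a z| with h | h <;> rw [h] at this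
      · obtain ⟨i, hi, hiyz⟩ := hg₁yz y z
        exact ⟨i, Finset.mem_cons_of_mem hi, this.trans hiyz⟩
      · exact ⟨a, Finset.mem_cons_self a s, this⟩

end approximation

section eLip

variable {X : Type*} {δ : X → X → ℝ≥0∞} {U : Set X}

lemma ofReal_abs_sub_le_of_eLip_lt {f : X → ℝ} {L : ℝ≥0∞} (h : eLip δ f U < L) {y z : X}
    (hy : y ∈ U) (hz : z ∈ U) : ENNReal.ofReal |f y - f z| ≤ L * δ y z := by
  obtain ⟨L', hL', hL'L⟩ := sInf_lt_iff.1 h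
  exact (hL' y hy z hz).trans (by gcongr)

lemma eLip_le_of_forall_exists_abs_sub_le {ι : Type*} {F : ι → X → ℝ} {g : X → ℝ} {L : ℝ≥0∞}
    (hF : ∀ i, eLip δ (F i) U ≤ L)
    (hg : ∀ y ∈ U, ∀ z ∈ U, ∃ i, |g y - g z| ≤ |F i y - F i z|) : eLip δ g U ≤ L := by
  refine le_of_forall_gt_imp_ge_of_dense fun L' hL' => sInf_le fun y hy z hz => ?_
  obtain ⟨i, hi⟩ := hg y hy z hz
  exact (ENNReal.ofReal_le_ofReal hi).trans
    (ofReal_abs_sub_le_of_eLip_lt ((hF i).trans_lt hL') hy hz)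

end eLip

theorem stmt2_general {X : Type*} (A : NonUnitalSubalgebra ℝ (X → ℝ))
    (hAb : ∀ f ∈ A, ∃ C : ℝ, ∀ x, |f x| ≤ C)
    (M : ℕ) (hM : 0 < M) (F : Fin M → X → ℝ) (hF : ∀ m, F m ∈ A)
    (δ : X → X → ℝ≥0∞)
    (S : Set X) (L : ℝ≥0) (hFlip : ∀ m, eLip δ (F m) S ≤ (L : ℝ≥0∞)) :
    ∀ ε > (0 : ℝ), ∃ g ∈ A,
      (∀ x, (⨅ m, F m x) ≤ g x ∧ g x ≤ ⨆ m, F m x) ∧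
      (∀ x, |g x - ⨆ m, F m x| ≤ ε) ∧
      eLip δ g S ≤ (L : ℝ≥0∞) := by
  intro ε hε
  have : Nonempty (Fin M) := ⟨⟨0, hM⟩⟩
  obtain ⟨g, hgA, hgx, hgyz⟩ :=
    exists_mem_approx_sup A hAb F Finset.univ_nonempty (fun m _ => hF m) ε hε
  have hle_sup : ∀ x, g x ≤ ⨆ m, F m x := fun x => by
    obtain ⟨-, ⟨m, -, hm⟩, -⟩ := hgx x
    exact hm.trans (le_ciSup (Finite.bddAbove_range fun m => F m x) m)
  refine ⟨g, hgA, fun x => ⟨?_, hle_sup x⟩, fun x => ?_, ?_⟩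
  · obtain ⟨⟨m, -, hm⟩, -⟩ := hgx x
    exact (ciInf_le (Finite.bddBelow_range fun m => F m x) m).trans hm
  · obtain ⟨-, -, herr⟩ := hgx x
    have := ciSup_le fun m => herr m (Finset.mem_univ m)
    rw [abs_le]
    constructor <;> linarith [hle_sup x]
  · refine eLip_le_of_forall_exists_abs_sub_le hFlip fun y _ z _ => ?_
    obtain ⟨m, -, hm⟩ := hgyz y z
    exact ⟨m, hm⟩

theorem stmt2 {X : Type*} (A : NonUnitalSubalgebra ℝ (X → ℝ))
    (hAb : ∀ f ∈ A, ∃ C : ℝ, ∀ x, |f x| ≤ C)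
    (M : ℕ) (hM : 0 < M) (F : Fin M → X → ℝ) (hF : ∀ m, F m ∈ A)
    (δ : X → X → ℝ≥0∞)
    (hδ0 : ∀ x, δ x x = 0) (hδsymm : ∀ x y, δ x y = δ y x)
    (hδtri : ∀ x y z, δ x z ≤ δ x y + δ y z)
    (S : Set X) (L : ℝ≥0) (hFlip : ∀ m, eLip δ (F m) S ≤ (L : ℝ≥0∞)) :
    ∀ ε > (0 : ℝ), ∃ g ∈ A,
      (∀ x, (⨅ m, F m x) ≤ g x ∧ g x ≤ ⨆ m, F m x) ∧
      (∀ x, |g x - ⨆ m, F m x| ≤ ε) ∧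
      eLip δ g S ≤ (L : ℝ≥0∞) :=
  stmt2_general A hAb M hM F hF δ S L hFlip
end

section
/- Let (X,τ) be a Hausdorff topological space, m a finite Radon measure on X, and A a unital subalgebra of the bounded continuous real-valued functions on X which separates the points of X. Let p ∈ [1,∞) and let I ⊆ ℝ be a closed (possibly unbounded) interval. Then for every Borel function f : X → ℝ with f(x) ∈ I for all x ∈ X and ∫_X |f|^p dm < ∞, there exists a sequence (f_n) in A with f_n(x) ∈ I for all x ∈ X and ∫_X |f − f_n|^p dm → 0 as n → ∞. -/
/-!
Stone–Weierstrass on compact sets, combined with inner regularity of `m`, makes every indicator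
of a measurable set an `L^p`-limit of elements of `A`; by density of simple functions, so is
every `f ∈ L^p`. To keep the values in `I`, an approximant `g ∈ A` with `|g| ≤ M` is replaced by
a polynomial in `g` approximating, uniformly on `[-M, M]`, the clamp of `g` onto a suitable
interval `[a, b] ⊆ I`. The endpoints are chosen so that on `[-M, M]` the clamp does not increase
the distance to any point of `I`, so the `L^p` error grows by at most an arbitrarily small
constant.
-/

open Filter Set Topology MeasureTheory
open scoped ENNReal

theorem IsClosed.exists_mem_le_forall_lt_imp_le {I : Set ℝ} (hI : IsClosed I) {t₀ : ℝ}
    (ht₀ : t₀ ∈ I) (c : ℝ) : ∃ a ∈ I, a ≤ t₀ ∧ ∀ s ∈ I, s < a → a ≤ c := by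
  by_cases hbdd : BddBelow I
  · exact ⟨sInf I, hI.csInf_mem ⟨t₀, ht₀⟩ hbdd, csInf_le hbdd ht₀,
      fun s hs hlt => absurd (csInf_le hbdd hs) hlt.not_ge⟩
  · obtain ⟨a, ha, hlt⟩ := not_bddBelow_iff.1 hbdd (min c t₀)
    exact ⟨a, ha, hlt.le.trans (min_le_right _ _), fun _ _ _ => hlt.le.trans (min_le_left _ _)⟩

theorem IsClosed.exists_mem_ge_forall_lt_imp_ge {I : Set ℝ} (hI : IsClosed I) {t₀ : ℝ}
    (ht₀ : t₀ ∈ I) (c : ℝ) : ∃ b ∈ I, t₀ ≤ b ∧ ∀ s ∈ I, b < s → c ≤ b := by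
  obtain ⟨a, ha, hat₀, hlt⟩ :=
    hI.neg.exists_mem_le_forall_lt_imp_le (Set.neg_mem_neg.2 ht₀) (-c)
  exact ⟨-a, ha, le_neg.1 hat₀, fun s hs hbs =>
    le_neg.1 (hlt (-s) (by simpa using hs) (neg_lt.1 hbs))⟩

theorem abs_sub_projIcc_le {a b s t : ℝ} (hab : a ≤ b) (ha : s < a → a ≤ t)
    (hb : b < s → t ≤ b) : |s - projIcc a b hab t| ≤ |s - t| := by
  have hπ := (projIcc a b hab t).2
  rcases lt_or_ge s a with hsa | has
  · have : (projIcc a b hab t : ℝ) ≤ t := by simp [coe_projIcc, ha hsa]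
    rw [abs_of_neg (by linarith [hπ.1]), abs_of_neg (by linarith [hπ.1])]
    linarith
  rcases le_or_gt s b with hsb | hbs
  · calc |s - projIcc a b hab t| = |(projIcc a b hab s : ℝ) - projIcc a b hab t| := by
          rw [projIcc_of_mem hab ⟨has, hsb⟩]
      _ ≤ |s - t| := abs_projIcc_sub_projIcc hab
  · have : t ≤ (projIcc a b hab t : ℝ) := by simp [coe_projIcc, hb hbs]
    rw [abs_of_pos (by linarith [hπ.2]), abs_of_pos (by linarith [hπ.2])]
    linarith

theorem abs_projIcc_sub_projIcc_shrink_le {a b δ : ℝ} (hδ0 : 0 ≤ δ) (hab : a ≤ b)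
    (hδ : a + δ ≤ b - δ) (t : ℝ) :
    |(projIcc (a + δ) (b - δ) hδ t : ℝ) - projIcc a b hab t| ≤ δ := by
  simp only [coe_projIcc, abs_le]
  constructor <;>
  rcases max_cases (a + δ) (min (b - δ) t) with h₁ | h₁ <;>
  rcases min_cases (b - δ) t with h₂ | h₂ <;>
  rcases max_cases a (min b t) with h₃ | h₃ <;>
  rcases min_cases b t with h₄ | h₄ <;> linarith

namespace Subalgebra

variable {X : Type*} (A : Subalgebra ℝ (X → ℝ))

theorem polynomial_eval_comp_mem {g : X → ℝ} (hg : g ∈ A) (q : Polynomial ℝ) :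
    (fun x => q.eval (g x)) ∈ A := by
  have h := (Polynomial.aeval (⟨g, hg⟩ : A) q).2
  rwa [Polynomial.aeval_subalgebra_coe, Polynomial.aeval_pi_apply] at h

theorem exists_mem_apply_mem_Icc_near_projIcc_comp {g : X → ℝ} (hg : g ∈ A) {M : ℝ}
    (hM : ∀ x, |g x| ≤ M) {a b : ℝ} (hab : a ≤ b) {ε : ℝ} (hε : 0 < ε) :
    ∃ G ∈ A, ∀ x, G x ∈ Icc a b ∧ |G x - projIcc a b hab (g x)| < ε := by
  rcases hab.eq_or_lt with rfl | hab'
  · refine ⟨fun _ => a, A.algebraMap_mem a, fun x => ⟨left_mem_Icc.2 le_rfl, ?_⟩⟩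
    have hπ := (projIcc a a hab (g x)).2
    simpa [le_antisymm hπ.2 hπ.1] using hε
  -- approximate the clamp onto a slightly smaller interval, so the polynomial stays in `[a, b]`
  set δ := min (ε / 2) ((b - a) / 2)
  have hδ0 : 0 < δ := lt_min (by linarith) (by linarith)
  have hδ : a + δ ≤ b - δ := by linarith [min_le_right (ε / 2) ((b - a) / 2)]
  obtain ⟨q, hq⟩ := exists_polynomial_near_of_continuousOn (-M) M
    (fun t => (projIcc (a + δ) (b - δ) hδ t : ℝ))
    (continuous_subtype_val.comp continuous_projIcc).continuousOn δ hδ0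
  refine ⟨fun x => q.eval (g x), A.polynomial_eval_comp_mem hg q, fun x => ?_⟩
  have hqx := abs_lt.1 (hq (g x) (abs_le.1 (hM x)))
  have hmem := (projIcc (a + δ) (b - δ) hδ (g x)).2
  have hshrink := abs_projIcc_sub_projIcc_shrink_le hδ0.le hab hδ (g x)
  refine ⟨⟨by linarith [hmem.1], by linarith [hmem.2]⟩, ?_⟩
  calc |q.eval (g x) - projIcc a b hab (g x)|
      ≤ |q.eval (g x) - projIcc (a + δ) (b - δ) hδ (g x)|
        + |(projIcc (a + δ) (b - δ) hδ (g x) : ℝ) - projIcc a b hab (g x)| := abs_sub_le _ _ _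
    _ < δ + δ := add_lt_add_of_lt_of_le (abs_lt.2 hqx) hshrink
    _ ≤ ε := by linarith [min_le_left (ε / 2) ((b - a) / 2)]

theorem exists_mem_apply_mem_abs_sub_le {I : Set ℝ} (hIc : IsClosed I) (hIconv : Convex ℝ I)
    (hI : I.Nonempty) {g : X → ℝ} (hg : g ∈ A) (hgb : ∃ C, ∀ x, |g x| ≤ C) {η : ℝ}
    (hη : 0 < η) : ∃ G ∈ A, (∀ x, G x ∈ I) ∧ ∀ x, ∀ s ∈ I, |s - G x| ≤ |s - g x| + η := by
  obtain ⟨M, hM⟩ := hgb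
  obtain ⟨t₀, ht₀⟩ := hI
  obtain ⟨a, ha, hat₀, ha'⟩ := hIc.exists_mem_le_forall_lt_imp_le ht₀ (-M)
  obtain ⟨b, hb, ht₀b, hb'⟩ := hIc.exists_mem_ge_forall_lt_imp_ge ht₀ M
  have hab : a ≤ b := hat₀.trans ht₀b
  obtain ⟨G, hGA, hG⟩ := A.exists_mem_apply_mem_Icc_near_projIcc_comp hg hM hab hη
  refine ⟨G, hGA, fun x => hIconv.ordConnected.out ha hb (hG x).1, fun x s hs => ?_⟩
  have hgx := abs_le.1 (hM x)
  have hclamp : |s - projIcc a b hab (g x)| ≤ |s - g x| :=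
    abs_sub_projIcc_le hab (fun h => (ha' s hs h).trans hgx.1)
      (fun h => hgx.2.trans (hb' s hs h))
  calc |s - G x| ≤ |s - projIcc a b hab (g x)| + |(projIcc a b hab (g x) : ℝ) - G x| :=
        abs_sub_le _ _ _
    _ ≤ |s - g x| + η := by
        rw [abs_sub_comm _ (G x)]
        exact add_le_add hclamp (hG x).2.le

theorem exists_mem_near_of_continuousOn_of_isCompact [TopologicalSpace X]
    (hAc : ∀ f ∈ A, Continuous f)
    (hAsep : ∀ x y : X, x ≠ y → ∃ f ∈ A, f x ≠ f y) {K : Set X} (hK : IsCompact K)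
    {h : X → ℝ} (hh : ContinuousOn h K) {ε : ℝ} (hε : 0 < ε) :
    ∃ g ∈ A, ∀ x ∈ K, |g x - h x| < ε := by
  have : CompactSpace K := isCompact_iff_compactSpace.mp hK
  let ρ : C(X, ℝ) →ₐ[ℝ] C(K, ℝ) :=
    ContinuousMap.compRightAlgHom ℝ ℝ ⟨Subtype.val, continuous_subtype_val⟩
  let B : Subalgebra ℝ C(K, ℝ) := (A.comap (ContinuousMap.coeFnAlgHom ℝ)).map ρ
  have hB : B.SeparatesPoints := by
    intro x y hxy
    obtain ⟨f, hfA, hf⟩ := hAsep x y (Subtype.coe_injective.ne hxy)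
    exact ⟨_, ⟨ρ ⟨f, hAc f hfA⟩, ⟨⟨f, hAc f hfA⟩, hfA, rfl⟩, rfl⟩, hf⟩
  obtain ⟨⟨_, g, hgA, rfl⟩, hg⟩ :=
    ContinuousMap.exists_mem_subalgebra_near_continuous_of_separatesPoints B hB (K.domRestrict h)
      hh.domRestrict ε hε
  exact ⟨g, hgA, fun x hx => hg ⟨x, hx⟩⟩

end Subalgebra

namespace MeasureTheory

variable {α : Type*} [MeasurableSpace α] {μ : Measure α} {p : ℝ≥0∞}

theorem exists_pos_eLpNorm_const_le [IsFiniteMeasure μ] {ε : ℝ≥0∞} (hε : ε ≠ 0) :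
    ∃ η : ℝ, 0 < η ∧ eLpNorm (fun _ : α => η) p μ ≤ ε := by
  have hμ : μ univ ^ p.toReal⁻¹ ≠ ∞ :=
    ENNReal.rpow_ne_top_of_nonneg (inv_nonneg.2 ENNReal.toReal_nonneg) (measure_ne_top μ _)
  obtain ⟨η, hη, hlt⟩ := ENNReal.exists_nnreal_pos_mul_lt hμ hε
  refine ⟨η, hη, (eLpNorm_le_of_ae_bound (C := η) (ae_of_all _ fun _ => ?_)).trans ?_⟩
  · simp
  · rw [ENNReal.ofReal_coe_nnreal, mul_comm]
    exact hlt.le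

theorem exists_ne_zero_eLpNorm_indicator_one_le (hp0 : p ≠ 0) (hp : p ≠ ∞) {ε : ℝ≥0∞}
    (hε : ε ≠ 0) : ∃ δ ≠ 0, ∀ s, MeasurableSet s → μ s ≤ δ →
      eLpNorm (s.indicator fun _ => (1 : ℝ)) p μ ≤ ε := by
  have hp' : 0 < p.toReal := ENNReal.toReal_pos hp0 hp
  refine ⟨ε ^ p.toReal, by simp [hε, hp'], fun s hs hμs => ?_⟩
  rw [eLpNorm_indicator_const hs hp0 hp, enorm_one, one_mul, one_div,
    ENNReal.rpow_inv_le_iff hp']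
  exact hμs

theorem eLpNorm_le_add_of_abs_le {u v w : α → ℝ} (hv : AEStronglyMeasurable v μ)
    (hw : AEStronglyMeasurable w μ) (hp : 1 ≤ p) (h : ∀ x, |u x| ≤ v x + w x) :
    eLpNorm u p μ ≤ eLpNorm v p μ + eLpNorm w p μ :=
  (eLpNorm_mono_real (g := v + w) h).trans (eLpNorm_add_le hv hw hp)

theorem lintegral_ofReal_abs_rpow_eq_eLpNorm_rpow {q : ℝ} (hq : 0 < q) (v : α → ℝ) :
    ∫⁻ x, ENNReal.ofReal (|v x| ^ q) ∂μ = eLpNorm v (ENNReal.ofReal q) μ ^ q := by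
  rw [eLpNorm_eq_eLpNorm' (by simpa using hq) ENNReal.ofReal_ne_top,
    ENNReal.toReal_ofReal hq.le, ← lintegral_rpow_enorm_eq_rpow_eLpNorm' hq]
  refine lintegral_congr fun x => ?_
  rw [Real.enorm_eq_ofReal_abs, ENNReal.ofReal_rpow_of_nonneg (abs_nonneg _) hq.le]

end MeasureTheory

theorem MeasurableSet.exists_isCompact_continuousOn_indicator_measure_compl_lt
    {α β : Type*} [TopologicalSpace α] [T2Space α] [MeasurableSpace α] [OpensMeasurableSpace α]
    [TopologicalSpace β] [Zero β] {μ : Measure α} [IsFiniteMeasure μ]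
    [μ.InnerRegularCompactLTTop] {S : Set α} (hS : MeasurableSet S) {δ : ℝ≥0∞} (hδ : δ ≠ 0)
    (c : β) : ∃ Y, IsCompact Y ∧ ContinuousOn (S.indicator fun _ => c) Y ∧ μ Yᶜ < δ := by
  obtain ⟨K, hKS, hK, hmK⟩ :=
    hS.exists_isCompact_sdiff_lt (measure_ne_top μ S) (ENNReal.half_pos hδ).ne'
  obtain ⟨K', hK'S, hK', hmK'⟩ :=
    hS.compl.exists_isCompact_sdiff_lt (measure_ne_top μ Sᶜ) (ENNReal.half_pos hδ).ne'
  refine ⟨K ∪ K', hK.union hK', ?_, ?_⟩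
  · exact (continuousOn_const.congr fun x hx => indicator_of_mem (hKS hx) _).union_of_isClosed
      (continuousOn_const.congr fun x hx => indicator_of_notMem (hK'S hx) _)
      hK.isClosed hK'.isClosed
  calc μ (K ∪ K')ᶜ ≤ μ (S \ K ∪ Sᶜ \ K') := measure_mono fun x hx => by
        by_cases hxS : x ∈ S
        · exact Or.inl ⟨hxS, fun h => hx (Or.inl h)⟩
        · exact Or.inr ⟨hxS, fun h => hx (Or.inr h)⟩
    _ ≤ μ (S \ K) + μ (Sᶜ \ K') := measure_union_le _ _
    _ < δ / 2 + δ / 2 := ENNReal.add_lt_add hmK hmK'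
    _ = δ := ENNReal.add_halves δ

theorem ENNReal.exists_seq_tendsto_zero_of_forall_le {ι : Type*} {P : ι → Prop} {d : ι → ℝ≥0∞}
    (h : ∀ ε ≠ 0, ∃ i, P i ∧ d i ≤ ε) :
    ∃ u : ℕ → ι, (∀ n, P (u n)) ∧ Tendsto (fun n => d (u n)) atTop (𝓝 0) := by
  choose u hP hd using fun n : ℕ =>
    h (n : ℝ≥0∞)⁻¹ (ENNReal.inv_ne_zero.2 (ENNReal.natCast_ne_top n))
  exact ⟨u, hP, tendsto_of_tendsto_of_tendsto_of_le_of_le tendsto_const_nhds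
    ENNReal.tendsto_inv_nat_nhds_zero (fun _ => zero_le) hd⟩

namespace Subalgebra

variable {X : Type*} [TopologicalSpace X] [T2Space X] [MeasurableSpace X] [BorelSpace X]
  (A : Subalgebra ℝ (X → ℝ)) (m : Measure X) [IsFiniteMeasure m] [m.InnerRegular] {p : ℝ≥0∞}

theorem exists_mem_eLpNorm_sub_indicator_one_le (hAc : ∀ f ∈ A, Continuous f)
    (hAb : ∀ f ∈ A, ∃ C : ℝ, ∀ x, |f x| ≤ C) (hAsep : ∀ x y : X, x ≠ y → ∃ f ∈ A, f x ≠ f y)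
    (hp1 : 1 ≤ p) (hp : p ≠ ∞) {S : Set X}
    (hS : MeasurableSet S) {ε : ℝ≥0∞} (hε : ε ≠ 0) :
    ∃ g ∈ A, eLpNorm (g - S.indicator fun _ => (1 : ℝ)) p m ≤ ε := by
  obtain ⟨η, hη, hηε⟩ := exists_pos_eLpNorm_const_le (μ := m) (p := p) (ENNReal.half_pos hε).ne'
  obtain ⟨δ, hδ, hδε⟩ := exists_ne_zero_eLpNorm_indicator_one_le (μ := m)
    (zero_lt_one.trans_le hp1).ne' hp (ENNReal.half_pos hε).ne'
  obtain ⟨Y, hY, hcont, hmY⟩ := hS.exists_isCompact_continuousOn_indicator_measure_compl_lt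
    (μ := m) hδ (1 : ℝ)
  obtain ⟨g₀, hg₀A, hg₀⟩ :=
    A.exists_mem_near_of_continuousOn_of_isCompact hAc hAsep hY hcont (half_pos hη)
  -- `g₀` may be large off `Y`; projecting it into `[0, 1]` bounds the error there by `1`
  obtain ⟨g, hgA, hg01, hg⟩ := A.exists_mem_apply_mem_abs_sub_le isClosed_Icc (convex_Icc 0 1)
    (nonempty_Icc.2 zero_le_one) hg₀A (hAb g₀ hg₀A) (half_pos hη)
  refine ⟨g, hgA, ?_⟩
  have hind01 : ∀ x, S.indicator (fun _ => (1 : ℝ)) x ∈ Icc (0 : ℝ) 1 := fun x => by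
    by_cases hx : x ∈ S <;> simp [hx]
  have hpt : ∀ x, |(g - S.indicator fun _ => (1 : ℝ)) x|
      ≤ η + Yᶜ.indicator (fun _ => 1) x := by
    intro x
    rw [Pi.sub_apply, abs_sub_comm]
    by_cases hx : x ∈ Y
    · rw [indicator_of_notMem (s := Yᶜ) (not_not_intro hx), add_zero]
      have h₁ := hg x _ (hind01 x)
      have h₂ := hg₀ x hx
      rw [abs_sub_comm] at h₂
      linarith
    · rw [indicator_of_mem (s := Yᶜ) hx]
      have h₁ := hind01 x
      have h₂ := hg01 x
      rw [abs_le]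
      constructor <;> linarith [h₁.1, h₁.2, h₂.1, h₂.2]
  have hYc : MeasurableSet Yᶜ := hY.isClosed.measurableSet.compl
  calc eLpNorm (g - S.indicator fun _ => (1 : ℝ)) p m
      ≤ eLpNorm (fun _ => η) p m + eLpNorm (Yᶜ.indicator fun _ => (1 : ℝ)) p m :=
        eLpNorm_le_add_of_abs_le aestronglyMeasurable_const
          (aestronglyMeasurable_const.indicator hYc) hp1 hpt
    _ ≤ ε / 2 + ε / 2 := add_le_add hηε (hδε _ hYc hmY.le)
    _ = ε := ENNReal.add_halves ε

theorem exists_mem_eLpNorm_sub_le (hAc : ∀ f ∈ A, Continuous f)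
    (hAb : ∀ f ∈ A, ∃ C : ℝ, ∀ x, |f x| ≤ C) (hAsep : ∀ x y : X, x ≠ y → ∃ f ∈ A, f x ≠ f y)
    (hp1 : 1 ≤ p) (hp : p ≠ ∞) {f : X → ℝ} (hf : MemLp f p m) {ε : ℝ≥0∞} (hε : ε ≠ 0) :
    ∃ g ∈ A, eLpNorm (f - g) p m ≤ ε := by
  have hind : ∀ (c : ℝ) ⦃S : Set X⦄, MeasurableSet S → m S < ∞ → ∀ {ε : ℝ≥0∞}, ε ≠ 0 →
      ∃ g, eLpNorm (g - S.indicator fun _ => c) p m ≤ ε ∧ g ∈ A := by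
    intro c S hS _ ε hε
    obtain ⟨g, hgA, hg⟩ := A.exists_mem_eLpNorm_sub_indicator_one_le m hAc hAb hAsep hp1 hp hS
      (ENNReal.div_pos hε (enorm_ne_top (x := c))).ne'
    refine ⟨c • g, ?_, A.smul_mem hgA c⟩
    have hsmul : c • g - S.indicator (fun _ => c) = c • (g - S.indicator fun _ => (1 : ℝ)) := by
      ext x
      by_cases hx : x ∈ S <;> simp [hx, mul_sub]
    calc eLpNorm (c • g - S.indicator fun _ => c) p m
        = ‖c‖ₑ * eLpNorm (g - S.indicator fun _ => (1 : ℝ)) p m := by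
          rw [hsmul, eLpNorm_const_smul]
      _ ≤ ‖c‖ₑ * (ε / ‖c‖ₑ) := by gcongr
      _ ≤ ε := ENNReal.mul_div_le
  obtain ⟨g, hg, hgA⟩ := hf.induction_dense hp (· ∈ A) hind (fun _ _ => A.add_mem)
    (fun g hg => (hAc g hg).aestronglyMeasurable) hε
  exact ⟨g, hgA, hg⟩

theorem exists_mem_apply_mem_eLpNorm_sub_le (hAc : ∀ f ∈ A, Continuous f)
    (hAb : ∀ f ∈ A, ∃ C : ℝ, ∀ x, |f x| ≤ C) (hAsep : ∀ x y : X, x ≠ y → ∃ f ∈ A, f x ≠ f y)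
    (hp1 : 1 ≤ p) (hp : p ≠ ∞) {I : Set ℝ} (hIc : IsClosed I) (hIconv : Convex ℝ I)
    {f : X → ℝ} (hf : MemLp f p m) (hfI : ∀ x, f x ∈ I) {ε : ℝ≥0∞} (hε : ε ≠ 0) :
    ∃ G ∈ A, (∀ x, G x ∈ I) ∧ eLpNorm (f - G) p m ≤ ε := by
  obtain ⟨g, hgA, hg⟩ := A.exists_mem_eLpNorm_sub_le m hAc hAb hAsep hp1 hp hf
    (ENNReal.half_pos hε).ne'
  rcases isEmpty_or_nonempty X with hX | ⟨⟨x₀⟩⟩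
  · exact ⟨g, hgA, isEmptyElim, hg.trans ENNReal.half_le_self⟩
  obtain ⟨η, hη, hηε⟩ := exists_pos_eLpNorm_const_le (μ := m) (p := p) (ENNReal.half_pos hε).ne'
  obtain ⟨G, hGA, hGI, hG⟩ :=
    A.exists_mem_apply_mem_abs_sub_le hIc hIconv ⟨f x₀, hfI x₀⟩ hgA (hAb g hgA) hη
  refine ⟨G, hGA, hGI, ?_⟩
  calc eLpNorm (f - G) p m ≤ eLpNorm (fun x => ‖(f - g) x‖) p m + eLpNorm (fun _ => η) p m :=
        eLpNorm_le_add_of_abs_le (hf.1.sub (hAc g hgA).aestronglyMeasurable).norm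
          aestronglyMeasurable_const hp1 fun x => hG x (f x) (hfI x)
    _ ≤ ε / 2 + ε / 2 := by
        rw [eLpNorm_norm]
        exact add_le_add hg hηε
    _ = ε := ENNReal.add_halves ε

end Subalgebra

theorem stmt3 {X : Type*} [TopologicalSpace X] [T2Space X] [MeasurableSpace X] [BorelSpace X]
    (m : Measure X) [IsFiniteMeasure m] [m.InnerRegular]
    (A : Subalgebra ℝ (X → ℝ))
    (hAc : ∀ f ∈ A, Continuous f)
    (hAb : ∀ f ∈ A, ∃ C : ℝ, ∀ x, |f x| ≤ C)
    (hAsep : ∀ x y : X, x ≠ y → ∃ f ∈ A, f x ≠ f y)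
    (p : ℝ) (hp : 1 ≤ p)
    (I : Set ℝ) (hIc : IsClosed I) (hIconv : Convex ℝ I)
    (f : X → ℝ) (hfm : Measurable f) (hfI : ∀ x, f x ∈ I)
    (hfint : ∫⁻ x, ENNReal.ofReal (|f x| ^ p) ∂m ≠ ⊤) :
    ∃ F : ℕ → X → ℝ, (∀ n, F n ∈ A) ∧ (∀ n x, F n x ∈ I) ∧
      Tendsto (fun n => ∫⁻ x, ENNReal.ofReal (|f x - F n x| ^ p) ∂m) atTop (𝓝 0) := by
  have hp0 : 0 < p := zero_lt_one.trans_le hp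
  have hf : MemLp f (ENNReal.ofReal p) m := by
    refine ⟨hfm.aestronglyMeasurable, lt_top_iff_ne_top.2 fun htop => hfint ?_⟩
    rw [lintegral_ofReal_abs_rpow_eq_eLpNorm_rpow hp0, htop, ENNReal.top_rpow_of_pos hp0]
  obtain ⟨F, hF, hlim⟩ := ENNReal.exists_seq_tendsto_zero_of_forall_le fun ε hε =>
    let ⟨G, hGA, hGI, hG⟩ := A.exists_mem_apply_mem_eLpNorm_sub_le m hAc hAb hAsep
      (ENNReal.one_le_ofReal.2 hp) ENNReal.ofReal_ne_top hIc hIconv hf hfI hε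
    ⟨G, (⟨hGA, hGI⟩ : G ∈ A ∧ ∀ x, G x ∈ I), hG⟩
  refine ⟨F, fun n => (hF n).1, fun n => (hF n).2, ?_⟩
  have hlint : ∀ n, ∫⁻ x, ENNReal.ofReal (|f x - F n x| ^ p) ∂m
      = eLpNorm (f - F n) (ENNReal.ofReal p) m ^ p := fun n =>
    lintegral_ofReal_abs_rpow_eq_eLpNorm_rpow hp0 (f - F n)
  simp_rw [hlint]
  simpa [ENNReal.zero_rpow_of_pos hp0] using hlim.ennrpow_const p
end

section
/- Let (X,τ) be a Hausdorff topological space, A a unital subalgebra of the bounded continuous real-valued functions on X which separates the points of X and generates the topology (τ is the coarsest topology on X making every element of A continuous), and let m be a finite Radon measure on X. Then for every bounded upper semicontinuous function g : X → ℝ: (i) g(x) = inf{ h(x) : h ∈ A, h(y) ≥ g(y) for all y ∈ X } for every x ∈ X; (ii) ∫_X g dm = inf{ ∫_X h dm : h ∈ A, h(y) ≥ g(y) for all y ∈ X }. -/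
open Filter Set Topology MeasureTheory
open scoped ENNReal

/-!
Since `τ` is the initial topology of `A`, a neighbourhood `U` of `x` contains a finite
intersection of sets `{y | |f y - f x| < δ}`, so a finite sum of squares gives `f ∈ A` with
`f ≥ 0`, `f x = 0` and `f ≥ 1` off `U`; adding a large multiple of such an `f` to the constant
`g x + ε` (with `U = {g < g x + ε}`) gives (i).

For (ii), the uniform closure of `A` is a lattice, because `|t|` is a uniform limit of
polynomials on the bounded range of each element of `A`. Minima of the functions above over a
finite cover of a compact set give Urysohn functions in it, and with inner regularity these
approximate the indicator of a closed set from above in `L¹` by elements of `A`. Finally, a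
bounded upper semicontinuous `g` lies below the step function `-M + Δ ∑ᵢ 1_{g ≥ -M + iΔ}` and
within `Δ` of it, and the level sets of that step function are closed.
-/

lemma exists_polynomial_near_abs (C : ℝ) {ε : ℝ} (hε : 0 < ε) :
    ∃ p : Polynomial ℝ, ∀ t, |t| ≤ C → |(p.eval t - |t|)| < ε := by
  obtain ⟨p, hp⟩ := exists_polynomial_near_of_continuousOn (-C) C (|·|)
    continuous_abs.continuousOn ε hε
  exact ⟨p, fun t ht => hp t (abs_le.mp ht)⟩

lemma csInf_eq_of_forall_le_of_forall_exists_le {α : Type*} {s : Set α} {P : α → Prop}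
    {φ : α → ℝ} {b : ℝ} (hle : ∀ a ∈ s, P a → b ≤ φ a)
    (happrox : ∀ ε > 0, ∃ a ∈ s, P a ∧ φ a ≤ b + ε) :
    sInf {r | ∃ a ∈ s, P a ∧ r = φ a} = b := by
  refine csInf_eq_of_forall_ge_of_forall_gt_exists_lt ?_ ?_ fun w hw => ?_
  · obtain ⟨a, ha, hPa, -⟩ := happrox 1 one_pos
    exact ⟨φ a, a, ha, hPa, rfl⟩
  · rintro _ ⟨a, ha, hPa, rfl⟩
    exact hle a ha hPa
  · obtain ⟨a, ha, hPa, hφa⟩ := happrox ((w - b) / 2) (by linarith)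
    exact ⟨φ a, ⟨a, ha, hPa, rfl⟩, by linarith⟩

lemma Subalgebra.polynomial_eval_comp_mem_s4 {X : Type*} {A : Subalgebra ℝ (X → ℝ)} {a : X → ℝ}
    (ha : a ∈ A) (p : Polynomial ℝ) : (fun y => p.eval (a y)) ∈ A := by
  have hmem : Polynomial.aeval a p ∈ A := by
    rw [← Polynomial.aeval_subalgebra_coe p A ⟨a, ha⟩]
    exact SetLike.coe_mem _
  convert hmem using 1
  ext y
  change _ = Pi.evalAlgHom ℝ (fun _ => ℝ) y (Polynomial.aeval a p)
  rw [← Polynomial.aeval_algHom_apply, Polynomial.coe_aeval_eq_eval]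
  rfl

def UniformlyApproximable {X : Type*} (A : Subalgebra ℝ (X → ℝ)) (h : X → ℝ) : Prop :=
  ∀ ε > 0, ∃ a ∈ A, ∀ y, |h y - a y| ≤ ε

namespace UniformlyApproximable

variable {X : Type*} {A : Subalgebra ℝ (X → ℝ)} {h h₁ h₂ : X → ℝ}

lemma of_mem (ha : h ∈ A) : UniformlyApproximable A h :=
  fun _ hε => ⟨h, ha, fun y => by simpa using hε.le⟩

lemma const (c : ℝ) : UniformlyApproximable A fun _ => c :=
  of_mem (A.algebraMap_mem c)

lemma add (H₁ : UniformlyApproximable A h₁) (H₂ : UniformlyApproximable A h₂) :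
    UniformlyApproximable A fun y => h₁ y + h₂ y := by
  intro ε hε
  obtain ⟨a₁, ha₁, hε₁⟩ := H₁ (ε / 2) (by positivity)
  obtain ⟨a₂, ha₂, hε₂⟩ := H₂ (ε / 2) (by positivity)
  refine ⟨a₁ + a₂, A.add_mem ha₁ ha₂, fun y => ?_⟩
  calc |h₁ y + h₂ y - (a₁ + a₂) y| = |(h₁ y - a₁ y) + (h₂ y - a₂ y)| := by
        rw [Pi.add_apply]; ring_nf
    _ ≤ |h₁ y - a₁ y| + |h₂ y - a₂ y| := abs_add_le _ _
    _ ≤ ε := by linarith [hε₁ y, hε₂ y]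

lemma const_mul (c : ℝ) (H : UniformlyApproximable A h) :
    UniformlyApproximable A fun y => c * h y := by
  intro ε hε
  obtain ⟨a, ha, hεa⟩ := H (ε / (|c| + 1)) (by positivity)
  refine ⟨c • a, A.smul_mem ha c, fun y => ?_⟩
  calc |c * h y - (c • a) y| = |c| * |h y - a y| := by
        rw [Pi.smul_apply, smul_eq_mul, ← mul_sub, abs_mul]
    _ ≤ (|c| + 1) * (ε / (|c| + 1)) :=
        mul_le_mul (by linarith) (hεa y) (abs_nonneg _) (by positivity)
    _ = ε := by field_simp

lemma sub (H₁ : UniformlyApproximable A h₁) (H₂ : UniformlyApproximable A h₂) :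
    UniformlyApproximable A fun y => h₁ y - h₂ y := by
  simpa [sub_eq_add_neg] using H₁.add (H₂.const_mul (-1))

lemma abs (hA : ∀ f ∈ A, ∃ C, ∀ x, |f x| ≤ C) (H : UniformlyApproximable A h) :
    UniformlyApproximable A fun y => |h y| := by
  intro ε hε
  obtain ⟨a, ha, hεa⟩ := H (ε / 2) (by positivity)
  obtain ⟨C, hC⟩ := hA a ha
  obtain ⟨p, hp⟩ := exists_polynomial_near_abs C (half_pos hε)
  refine ⟨fun y => p.eval (a y), A.polynomial_eval_comp_mem_s4 ha p, fun y => ?_⟩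
  have h₁ := (abs_abs_sub_abs_le_abs_sub (h y) (a y)).trans (hεa y)
  have h₂ := hp _ (hC y)
  rw [abs_sub_comm] at h₂
  linarith [abs_sub_le (|h y|) (|a y|) (p.eval (a y))]

lemma max (hA : ∀ f ∈ A, ∃ C, ∀ x, |f x| ≤ C) (H₁ : UniformlyApproximable A h₁)
    (H₂ : UniformlyApproximable A h₂) : UniformlyApproximable A fun y => max (h₁ y) (h₂ y) := by
  convert ((H₁.add H₂).add ((H₁.sub H₂).abs hA)).const_mul (1 / 2) using 2 with y
  rw [max_def]
  split_ifs with hle <;>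
    [rw [abs_of_nonpos (by linarith)]; rw [abs_of_pos (by linarith)]] <;> ring

lemma min (hA : ∀ f ∈ A, ∃ C, ∀ x, |f x| ≤ C) (H₁ : UniformlyApproximable A h₁)
    (H₂ : UniformlyApproximable A h₂) : UniformlyApproximable A fun y => min (h₁ y) (h₂ y) := by
  convert ((H₁.add H₂).sub ((H₁.sub H₂).abs hA)).const_mul (1 / 2) using 2 with y
  rw [min_def]
  split_ifs with hle <;>
    [rw [abs_of_nonpos (by linarith)]; rw [abs_of_pos (by linarith)]] <;> ring

end UniformlyApproximable

section Topology

variable {X : Type*} [tX : TopologicalSpace X] {A : Subalgebra ℝ (X → ℝ)}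

lemma exists_mem_nonneg_eq_zero_one_le_of_mem_nhds
    (hAgen : tX = ⨅ f ∈ A, TopologicalSpace.induced f inferInstance) {x : X} {U : Set X}
    (hU : U ∈ 𝓝 x) : ∃ f ∈ A, 0 ≤ f ∧ f x = 0 ∧ ∀ y ∉ U, 1 ≤ f y := by
  have hnhds : 𝓝 x = ⨅ a : A, comap a (𝓝 (a.1 x)) := by
    rw [hAgen, iInf_subtype', nhds_iInf]
    exact iInf_congr fun a => nhds_induced a.1 x
  rw [hnhds, mem_iInf] at hU
  obtain ⟨I, hI, V, hV, rfl⟩ := hU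
  have hball : ∀ i : I, ∃ δ > 0, ∀ y, |i.1.1 y - i.1.1 x| < δ → y ∈ V i := fun i => by
    obtain ⟨δ, hδ, hsub⟩ := ((Metric.nhds_basis_ball.comap _).mem_iff).mp (hV i)
    exact ⟨δ, hδ, fun y hy => hsub hy⟩
  choose δ hδ hδV using hball
  have := hI.fintype
  set f : X → ℝ := ∑ i : I, ((δ i)⁻¹ • (i.1.1 - algebraMap ℝ _ (i.1.1 x))) ^ 2
  have hf : ∀ y, f y = ∑ i : I, ((i.1.1 y - i.1.1 x) / δ i) ^ 2 := fun y => by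
    simp [f, Finset.sum_apply, div_eq_inv_mul]
  refine ⟨f, A.sum_mem fun i _ => A.pow_mem (A.smul_mem (A.sub_mem i.1.2 (A.algebraMap_mem _)) _) 2,
    fun y => ?_, by simp [hf], fun y hy => ?_⟩
  · rw [Pi.zero_apply, hf]
    positivity
  · obtain ⟨i, hi⟩ : ∃ i, y ∉ V i := by simpa using hy
    have hfar : δ i ≤ |i.1.1 y - i.1.1 x| := not_lt.mp fun h => hi (hδV i y h)
    have hterm : 1 ≤ ((i.1.1 y - i.1.1 x) / δ i) ^ 2 := by
      rw [div_pow, one_le_div (pow_pos (hδ i) 2), ← sq_abs (i.1.1 y - i.1.1 x)]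
      exact pow_le_pow_left₀ (hδ i).le hfar 2
    rw [hf]
    exact hterm.trans (Finset.single_le_sum (f := fun j : I => ((j.1.1 y - j.1.1 x) / δ j) ^ 2)
      (fun j _ => sq_nonneg _) (Finset.mem_univ i))

lemma exists_mem_le_le_add_of_upperSemicontinuous
    (hAgen : tX = ⨅ f ∈ A, TopologicalSpace.induced f inferInstance) {g : X → ℝ}
    (hg : UpperSemicontinuous g) {M : ℝ} (hM : ∀ y, g y ≤ M) (x : X) {ε : ℝ} (hε : 0 < ε) :
    ∃ h ∈ A, g ≤ h ∧ h x ≤ g x + ε := by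
  obtain ⟨f, hfA, hf0, hfx, hf1⟩ :=
    exists_mem_nonneg_eq_zero_one_le_of_mem_nhds hAgen (hg x (g x + ε) (by linarith))
  set c := max 0 (M - (g x + ε))
  refine ⟨algebraMap ℝ _ (g x + ε) + c • f, A.add_mem (A.algebraMap_mem _) (A.smul_mem hfA c),
    fun y => ?_, by simp [hfx]⟩
  have hcf : 0 ≤ c * f y := mul_nonneg (le_max_left _ _) (hf0 y)
  change g y ≤ g x + ε + c * f y
  by_cases hy : g y < g x + ε
  · linarith
  · have := mul_le_mul_of_nonneg_left (hf1 y hy) (le_max_left 0 (M - (g x + ε)))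
    linarith [le_max_right 0 (M - (g x + ε)), hM y]

end Topology

section Urysohn

variable {X : Type*} [tX : TopologicalSpace X] {A : Subalgebra ℝ (X → ℝ)}

lemma exists_uniformlyApproximable_le_half_one_le
    (hAgen : tX = ⨅ f ∈ A, TopologicalSpace.induced f inferInstance)
    (hAc : ∀ f ∈ A, Continuous f) (hAb : ∀ f ∈ A, ∃ C, ∀ x, |f x| ≤ C)
    {K V : Set X} (hK : IsCompact K) (hKV : K ⊆ V) (hV : IsOpen V) :
    ∃ u, UniformlyApproximable A u ∧ (∀ y ∈ K, u y ≤ 1 / 2) ∧ ∀ y ∉ V, 1 ≤ u y := by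
  refine hK.induction_on (p := fun s => ∃ u, UniformlyApproximable A u ∧
    (∀ y ∈ s, u y ≤ 1 / 2) ∧ ∀ y ∉ V, 1 ≤ u y) ?_ ?_ ?_ ?_
  · exact ⟨fun _ => 1, .const 1, by simp, fun _ _ => le_rfl⟩
  · exact fun s t hst ⟨u, hu, hut, huV⟩ => ⟨u, hu, fun y hy => hut y (hst hy), huV⟩
  · rintro s t ⟨u, hu, hus, huV⟩ ⟨v, hv, hvt, hvV⟩
    refine ⟨fun y => min (u y) (v y), hu.min hAb hv, ?_, fun y hy => le_min (huV y hy) (hvV y hy)⟩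
    rintro y (hy | hy)
    exacts [(min_le_left _ _).trans (hus y hy), (min_le_right _ _).trans (hvt y hy)]
  · intro x hx
    obtain ⟨f, hfA, -, hfx, hf1⟩ :=
      exists_mem_nonneg_eq_zero_one_le_of_mem_nhds hAgen (hV.mem_nhds (hKV hx))
    refine ⟨{y | f y < 1 / 2}, mem_nhdsWithin_of_mem_nhds ?_, f, .of_mem hfA,
      fun y hy => le_of_lt hy, hf1⟩
    exact (isOpen_lt (hAc f hfA) continuous_const).mem_nhds (by simp [hfx])

lemma exists_mem_indicator_le_le_indicator_add
    (hAgen : tX = ⨅ f ∈ A, TopologicalSpace.induced f inferInstance)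
    (hAc : ∀ f ∈ A, Continuous f) (hAb : ∀ f ∈ A, ∃ C, ∀ x, |f x| ≤ C)
    {K F : Set X} (hK : IsCompact K) (hF : IsClosed F) (hKF : Disjoint K F) {δ : ℝ} (hδ : 0 < δ) :
    ∃ h ∈ A, F.indicator 1 ≤ h ∧ h ≤ fun y => Kᶜ.indicator 1 y + δ := by
  obtain ⟨u, hu, huK, huF⟩ := exists_uniformlyApproximable_le_half_one_le hAgen hAc hAb hK
    hKF.subset_compl_right hF.isOpen_compl
  set v := fun y => max 0 (min 1 (2 * u y - 1))
  have hv : UniformlyApproximable A v := (UniformlyApproximable.const 0).max hAb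
    (UniformlyApproximable.min hAb (.const 1) ((hu.const_mul 2).sub (.const 1)))
  have hFv : F.indicator 1 ≤ v := fun y => Set.indicator_apply_le'
    (fun hy => show (1 : ℝ) ≤ v y from
      le_max_of_le_right (le_min le_rfl (by linarith [huF y (not_not.mpr hy)])))
    fun _ => le_max_left _ _
  have hvK : v ≤ Kᶜ.indicator 1 := fun y => Set.le_indicator_apply
    (fun _ => max_le zero_le_one (min_le_left _ _))
    fun hy => max_le le_rfl (min_le_of_right_le (by linarith [huK y (not_not.mp hy)]))
  obtain ⟨a, ha, hva⟩ := hv (δ / 2) (half_pos hδ)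
  refine ⟨a + algebraMap ℝ _ (δ / 2), A.add_mem ha (A.algebraMap_mem _), fun y => ?_, fun y => ?_⟩
  · change _ ≤ a y + δ / 2
    linarith [hFv y, (abs_le.mp (hva y)).2]
  · change a y + δ / 2 ≤ _
    linarith [hvK y, (abs_le.mp (hva y)).1]

end Urysohn

def UpperApproximable {X : Type*} [MeasurableSpace X] (A : Subalgebra ℝ (X → ℝ)) (m : Measure X)
    (g : X → ℝ) : Prop :=
  Integrable g m ∧ ∀ ε > 0, ∃ h ∈ A, g ≤ h ∧ ∫ x, h x ∂m ≤ ∫ x, g x ∂m + ε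

namespace UpperApproximable

variable {X : Type*} [MeasurableSpace X] {A : Subalgebra ℝ (X → ℝ)} {m : Measure X}
  {g g₁ g₂ : X → ℝ}

lemma const [IsFiniteMeasure m] (c : ℝ) : UpperApproximable A m fun _ => c :=
  ⟨integrable_const c, fun _ hε => ⟨_, A.algebraMap_mem c, le_rfl, le_add_of_nonneg_right hε.le⟩⟩

lemma add (hA : ∀ f ∈ A, Integrable f m) (H₁ : UpperApproximable A m g₁)
    (H₂ : UpperApproximable A m g₂) : UpperApproximable A m fun y => g₁ y + g₂ y := by
  refine ⟨H₁.1.add H₂.1, fun ε hε => ?_⟩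
  obtain ⟨h₁, hh₁, hgh₁, hint₁⟩ := H₁.2 (ε / 2) (half_pos hε)
  obtain ⟨h₂, hh₂, hgh₂, hint₂⟩ := H₂.2 (ε / 2) (half_pos hε)
  refine ⟨h₁ + h₂, A.add_mem hh₁ hh₂, fun y => add_le_add (hgh₁ y) (hgh₂ y), ?_⟩
  simp only [Pi.add_apply]
  rw [integral_add (hA h₁ hh₁) (hA h₂ hh₂), integral_add H₁.1 H₂.1]
  linarith

lemma const_mul {c : ℝ} (hc : 0 ≤ c) (H : UpperApproximable A m g) :
    UpperApproximable A m fun y => c * g y := by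
  refine ⟨H.1.const_mul c, fun ε hε => ?_⟩
  obtain ⟨h, hh, hgh, hint⟩ := H.2 (ε / (c + 1)) (by positivity)
  refine ⟨c • h, A.smul_mem hh c, fun y => mul_le_mul_of_nonneg_left (hgh y) hc, ?_⟩
  simp only [Pi.smul_apply, smul_eq_mul]
  rw [integral_const_mul, integral_const_mul]
  calc c * ∫ y, h y ∂m ≤ c * (∫ y, g y ∂m + ε / (c + 1)) := mul_le_mul_of_nonneg_left hint hc
    _ ≤ c * ∫ y, g y ∂m + ε := by
      rw [mul_add, mul_div_assoc']
      gcongr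
      rw [div_le_iff₀ (by positivity)]
      linarith

lemma sum [IsFiniteMeasure m] (hA : ∀ f ∈ A, Integrable f m) {ι : Type*} (s : Finset ι)
    {g : ι → X → ℝ} (hg : ∀ i ∈ s, UpperApproximable A m (g i)) :
    UpperApproximable A m fun y => ∑ i ∈ s, g i y := by
  induction s using Finset.cons_induction with
  | empty => simpa using const (A := A) (m := m) 0
  | cons i s his ih =>
    simp only [Finset.sum_cons]
    rw [Finset.forall_mem_cons] at hg
    exact add hA hg.1 (ih hg.2)

lemma of_forall_exists_le (hg : Integrable g m)
    (H : ∀ ε > 0, ∃ s, UpperApproximable A m s ∧ g ≤ s ∧ ∫ y, s y ∂m ≤ ∫ y, g y ∂m + ε) :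
    UpperApproximable A m g := by
  refine ⟨hg, fun ε hε => ?_⟩
  obtain ⟨s, hs, hgs, hint⟩ := H (ε / 2) (half_pos hε)
  obtain ⟨h, hh, hsh, hint'⟩ := hs.2 (ε / 2) (half_pos hε)
  exact ⟨h, hh, hgs.trans hsh, by linarith⟩

end UpperApproximable

lemma le_add_sum_ite_and_add_sum_ite_le {a t Δ : ℝ} (hΔ : 0 < Δ) {n : ℕ} (hat : a ≤ t)
    (hta : t ≤ a + n * Δ) :
    t ≤ a + ∑ i ∈ Finset.range n, (if a + i * Δ ≤ t then Δ else 0) ∧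
      a + ∑ i ∈ Finset.range n, (if a + i * Δ ≤ t then Δ else 0) ≤ t + Δ := by
  have hq : 0 ≤ (t - a) / Δ := div_nonneg (by linarith) hΔ.le
  set k := ⌊(t - a) / Δ⌋₊
  have hcond : ∀ i : ℕ, a + i * Δ ≤ t ↔ i < k + 1 := fun i => by
    rw [Nat.lt_succ_iff, Nat.le_floor_iff hq, le_div_iff₀ hΔ]
    constructor <;> intro <;> linarith
  have hsum : ∑ i ∈ Finset.range n, (if a + i * Δ ≤ t then Δ else 0) = min n (k + 1) * Δ := by
    simp_rw [hcond]
    rw [← Finset.sum_filter, show {i ∈ Finset.range n | i < k + 1} = Finset.range (min n (k + 1))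
      by ext; simp, Finset.sum_const, Finset.card_range, nsmul_eq_mul]
  have hN : (t - a) / Δ ≤ (min n (k + 1) : ℕ) := by
    push_cast
    exact le_min ((div_le_iff₀ hΔ).mpr (by linarith)) (Nat.lt_floor_add_one _).le
  have hN' : ((min n (k + 1) : ℕ) : ℝ) ≤ (t - a) / Δ + 1 := by
    push_cast
    exact (min_le_right _ _).trans (by linarith [Nat.floor_le hq])
  rw [div_le_iff₀ hΔ] at hN
  rw [div_add_one hΔ.ne', le_div_iff₀ hΔ] at hN'
  rw [hsum]
  constructor <;> linarith

section Measure

variable {X : Type*} [tX : TopologicalSpace X] [MeasurableSpace X] [OpensMeasurableSpace X]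
  {A : Subalgebra ℝ (X → ℝ)} {m : Measure X} [IsFiniteMeasure m]

lemma UpperApproximable.indicator_of_isClosed [T2Space X] [m.InnerRegular]
    (hAgen : tX = ⨅ f ∈ A, TopologicalSpace.induced f inferInstance)
    (hAc : ∀ f ∈ A, Continuous f) (hAb : ∀ f ∈ A, ∃ C, ∀ x, |f x| ≤ C)
    (hA : ∀ f ∈ A, Integrable f m) {F : Set X} (hF : IsClosed F) :
    UpperApproximable A m (F.indicator 1) := by
  refine ⟨(integrable_const 1).indicator hF.measurableSet, fun ε hε => ?_⟩
  obtain ⟨K, hKF, hK, hKm⟩ := hF.isOpen_compl.measurableSet.exists_isCompact_sdiff_lt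
    (measure_ne_top m Fᶜ) (ε := ENNReal.ofReal (ε / 2)) (by simpa using half_pos hε)
  set δ := ε / (2 * (m.real univ + 1))
  have hδ : δ * m.real univ ≤ ε / 2 := by
    rw [div_mul_eq_mul_div, div_le_div_iff₀ (by positivity) two_pos]
    nlinarith [measureReal_nonneg (μ := m) (s := univ)]
  obtain ⟨h, hhA, hFh, hhK⟩ := exists_mem_indicator_le_le_indicator_add hAgen hAc hAb hK hF
    (disjoint_compl_left.mono_left hKF) (by positivity : 0 < δ)
  have hKc : m.real Kᶜ ≤ m.real F + ε / 2 := by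
    have hsub : Kᶜ ⊆ F ∪ Fᶜ \ K := fun y hy => by by_cases hyF : y ∈ F <;> simp_all
    calc m.real Kᶜ ≤ m.real (F ∪ Fᶜ \ K) := measureReal_mono hsub
      _ ≤ m.real F + m.real (Fᶜ \ K) := measureReal_union_le _ _
      _ ≤ m.real F + ε / 2 := by
        gcongr
        exact (ENNReal.toReal_lt_of_lt_ofReal hKm).le
  have hKi : Integrable (Kᶜ.indicator (1 : X → ℝ)) m :=
    (integrable_const 1).indicator hK.measurableSet.compl
  refine ⟨h, hhA, hFh, ?_⟩
  calc ∫ y, h y ∂m ≤ ∫ y, (Kᶜ.indicator 1 y + δ) ∂m :=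
        integral_mono (hA h hhA) (hKi.add (integrable_const δ)) hhK
    _ = m.real Kᶜ + δ * m.real univ := by
        rw [integral_add hKi (integrable_const δ), integral_indicator_one hK.measurableSet.compl,
          integral_const, smul_eq_mul, mul_comm]
    _ ≤ ∫ y, F.indicator 1 y ∂m + ε := by
        rw [integral_indicator_one hF.measurableSet]
        linarith

lemma upperApproximable_of_upperSemicontinuous [T2Space X] [m.InnerRegular]
    (hAgen : tX = ⨅ f ∈ A, TopologicalSpace.induced f inferInstance)
    (hAc : ∀ f ∈ A, Continuous f) (hAb : ∀ f ∈ A, ∃ C, ∀ x, |f x| ≤ C)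
    (hA : ∀ f ∈ A, Integrable f m) {g : X → ℝ} (hg : UpperSemicontinuous g) {M : ℝ}
    (hM : ∀ y, |g y| ≤ M) : UpperApproximable A m g := by
  have hgi : Integrable g m := .of_bound hg.measurable.aestronglyMeasurable M (.of_forall hM)
  refine .of_forall_exists_le hgi fun ε hε => ?_
  set Δ := ε / (m.real univ + 1)
  have hΔ : 0 < Δ := by positivity
  set n := ⌈2 * M / Δ⌉₊
  have hn : 2 * M ≤ n * Δ := (div_le_iff₀ hΔ).mp (Nat.le_ceil _)
  set F : ℕ → Set X := fun i => g ⁻¹' Ici (-M + i * Δ)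
  set s := fun y => -M + ∑ i ∈ Finset.range n, Δ * (F i).indicator 1 y
  have hs : UpperApproximable A m s := (UpperApproximable.const (-M)).add hA
    (.sum hA _ fun i _ => .const_mul hΔ.le (.indicator_of_isClosed hAgen hAc hAb hA
      (hg.isClosed_preimage _)))
  have hind : ∀ i y, Δ * (F i).indicator 1 y = if -M + i * Δ ≤ g y then Δ else 0 :=
    fun i y => by by_cases h : -M + i * Δ ≤ g y <;> simp [F, h]
  have hgs : ∀ y, g y ≤ s y ∧ s y ≤ g y + Δ := fun y => by
    have := abs_le.mp (hM y)
    simp only [s, hind]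
    exact le_add_sum_ite_and_add_sum_ite_le hΔ (by linarith) (by linarith)
  refine ⟨s, hs, fun y => (hgs y).1, ?_⟩
  calc ∫ y, s y ∂m ≤ ∫ y, (g y + Δ) ∂m :=
        integral_mono hs.1 (hgi.add (integrable_const Δ)) fun y => (hgs y).2
    _ = ∫ y, g y ∂m + Δ * m.real univ := by
        rw [integral_add hgi (integrable_const Δ), integral_const, smul_eq_mul, mul_comm]
    _ ≤ ∫ y, g y ∂m + ε := by
        gcongr
        rw [div_mul_eq_mul_div, div_le_iff₀ (by positivity)]
        nlinarith [measureReal_nonneg (μ := m) (s := univ)]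

end Measure

theorem stmt4_general {X : Type*} [tX : TopologicalSpace X] [T2Space X] [MeasurableSpace X] [BorelSpace X]
    (m : Measure X) [IsFiniteMeasure m] [m.InnerRegular]
    (A : Subalgebra ℝ (X → ℝ))
    (hAc : ∀ f ∈ A, Continuous f)
    (hAb : ∀ f ∈ A, ∃ C : ℝ, ∀ x, |f x| ≤ C)
    (hAgen : tX = ⨅ f ∈ A, TopologicalSpace.induced f inferInstance)
    (g : X → ℝ) (hgu : UpperSemicontinuous g) (hgb : ∃ C : ℝ, ∀ x, |g x| ≤ C) :
    (∀ x, g x = sInf {r : ℝ | ∃ h ∈ A, (∀ y, g y ≤ h y) ∧ r = h x}) ∧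
    (∫ x, g x ∂m = sInf {r : ℝ | ∃ h ∈ A, (∀ y, g y ≤ h y) ∧ r = ∫ x, h x ∂m}) := by
  obtain ⟨C, hC⟩ := hgb
  have hA : ∀ f ∈ A, Integrable f m := fun f hf =>
    have ⟨Cf, hCf⟩ := hAb f hf
    .of_bound (hAc f hf).aestronglyMeasurable Cf (.of_forall hCf)
  refine ⟨fun x => ?_, ?_⟩
  · refine (csInf_eq_of_forall_le_of_forall_exists_le (fun h _ hgh => hgh x) fun ε hε => ?_).symm
    exact exists_mem_le_le_add_of_upperSemicontinuous hAgen hgu (fun y => (abs_le.mp (hC y)).2) x hε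
  · have ⟨hgi, happrox⟩ :=
      upperApproximable_of_upperSemicontinuous hAgen hAc hAb hA (m := m) hgu hC
    exact (csInf_eq_of_forall_le_of_forall_exists_le
      (fun h hh hgh => integral_mono hgi (hA h hh) hgh) happrox).symm

theorem stmt4 {X : Type*} [tX : TopologicalSpace X] [T2Space X] [MeasurableSpace X] [BorelSpace X]
    (m : Measure X) [IsFiniteMeasure m] [m.InnerRegular]
    (A : Subalgebra ℝ (X → ℝ))
    (hAc : ∀ f ∈ A, Continuous f)
    (hAb : ∀ f ∈ A, ∃ C : ℝ, ∀ x, |f x| ≤ C)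
    (hAsep : ∀ x y : X, x ≠ y → ∃ f ∈ A, f x ≠ f y)
    (hAgen : tX = ⨅ f ∈ A, TopologicalSpace.induced f inferInstance)
    (g : X → ℝ) (hgu : UpperSemicontinuous g) (hgb : ∃ C : ℝ, ∀ x, |g x| ≤ C) :
    (∀ x, g x = sInf {r : ℝ | ∃ h ∈ A, (∀ y, g y ≤ h y) ∧ r = h x}) ∧
    (∫ x, g x ∂m = sInf {r : ℝ | ∃ h ∈ A, (∀ y, g y ≤ h y) ∧ r = ∫ x, h x ∂m}) :=
  stmt4_general (tX := tX) m A hAc hAb hAgen g hgu hgb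
end

section
/- Let (X,τ) be a topological space, let A be a unital subalgebra of the Banach space of bounded continuous real-valued functions on X with the supremum norm, and let A* denote the continuous dual of A. Suppose φ ∈ A* is a character, i.e. φ ≠ 0 and φ(fg) = φ(f)·φ(g) for all f, g ∈ A. Then: φ(f) ≥ 0 for every f ∈ A with f ≥ 0 pointwise; φ(1) = 1; ‖φ‖_{A*} = 1; and φ is an extreme point of the convex set Σ := { ψ ∈ A* : ‖ψ‖_{A*} ≤ 1, ψ(1) = 1, and ψ(f) ≥ 0 for every f ∈ A with f ≥ 0 pointwise }. -/
/-!
Multiplicativity gives `φ 1 = 1`, and `‖φ a‖ ^ n = ‖φ (a ^ n)‖ ≤ ‖φ‖ ‖a‖ ^ n` for every `n`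
forces `‖φ a‖ ≤ ‖a‖`, so `‖φ‖ = 1` (no completeness of `A` is needed). A functional of norm
at most one fixing `1` is positive, since for `f ≥ 0` we have
`|ψ f - ‖f‖| ≤ ‖f - ‖f‖ • 1‖ ≤ ‖f‖`. For extremality, put `b = f - φ f • 1`: if
`φ = (ψ₁ + ψ₂) / 2` with states `ψᵢ`, then `0 = φ (b * b)` forces `ψᵢ (b * b) = 0`, and the
Schwarz inequality `ψᵢ b ^ 2 ≤ ψᵢ (b * b)` gives `ψᵢ f = φ f`.
-/

set_option synthInstance.maxHeartbeats 1000000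
set_option maxHeartbeats 1000000

open BoundedContinuousFunction

/-- The topological dual of a seminormed space `E` (as in the older Mathlib; removed upstream). -/
abbrev NormedSpace.Dual (𝕜 : Type*) [NontriviallyNormedField 𝕜] (E : Type*) [SeminormedAddCommGroup E]
    [NormedSpace 𝕜 E] : Type _ := E →L[𝕜] 𝕜

/-- The set `Σ` of "states": continuous linear functionals `ψ` on `A` with `‖ψ‖ ≤ 1`,
`ψ 1 = 1`, and `ψ f ≥ 0` whenever `f` is pointwise nonnegative. -/
def stateSet {X : Type*} [TopologicalSpace X]
    (A : Subalgebra ℝ (BoundedContinuousFunction X ℝ)) :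
    Set (NormedSpace.Dual ℝ A) :=
  {ψ | ‖ψ‖ ≤ 1 ∧ ψ 1 = 1 ∧
    ∀ f : A, (∀ x, 0 ≤ (f : BoundedContinuousFunction X ℝ) x) → 0 ≤ ψ f}

section Multiplicative

lemma map_one_eq_one_of_map_mul {M M₀ : Type*} [MulOneClass M] [MulZeroOneClass M₀]
    [IsLeftCancelMulZero M₀] {φ : M → M₀} (hmul : ∀ a b, φ (a * b) = φ a * φ b) {a : M} (ha : φ a ≠ 0) : φ 1 = 1 :=
  (mul_left_cancel₀ ha (by rw [← hmul, mul_one, mul_one])).symm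

variable {𝕜 A : Type*} [NontriviallyNormedField 𝕜] [SeminormedRing A] [NormedSpace 𝕜 A]
  {φ : A →L[𝕜] 𝕜}

lemma map_pow_succ_of_map_mul (hmul : ∀ a b, φ (a * b) = φ a * φ b) (a : A) (n : ℕ) :
    φ (a ^ (n + 1)) = φ a ^ (n + 1) := by
  induction n with
  | zero => simp
  | succ n ih => rw [pow_succ, hmul, ih, ← pow_succ]

lemma norm_apply_le_of_map_mul (hmul : ∀ a b, φ (a * b) = φ a * φ b) (a : A) :
    ‖φ a‖ ≤ ‖a‖ := by
  rcases (norm_nonneg a).eq_or_lt with ha | ha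
  · simpa [← ha] using φ.le_opNorm a
  by_contra! hlt
  obtain ⟨n, hn⟩ := pow_unbounded_of_one_lt ‖φ‖ ((one_lt_div ha).mpr hlt)
  have hpow : ‖φ a‖ ^ (n + 1) ≤ ‖φ‖ * ‖a‖ ^ (n + 1) := calc
    ‖φ a‖ ^ (n + 1) = ‖φ (a ^ (n + 1))‖ := by rw [map_pow_succ_of_map_mul hmul, norm_pow]
    _ ≤ ‖φ‖ * ‖a ^ (n + 1)‖ := φ.le_opNorm _
    _ ≤ ‖φ‖ * ‖a‖ ^ (n + 1) := by gcongr; exact norm_pow_le' a n.succ_pos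
  have : (‖φ a‖ / ‖a‖) ^ (n + 1) ≤ ‖φ‖ := by
    rwa [div_pow, div_le_iff₀ (by positivity)]
  have : (‖φ a‖ / ‖a‖) ^ n ≤ (‖φ a‖ / ‖a‖) ^ (n + 1) :=
    pow_le_pow_right₀ ((one_lt_div ha).mpr hlt).le n.le_succ
  linarith

lemma opNorm_eq_one_of_map_mul (hmul : ∀ a b, φ (a * b) = φ a * φ b) (h1 : φ 1 = 1)
    (hA : ‖(1 : A)‖ ≤ 1) : ‖φ‖ = 1 := by
  refine le_antisymm (φ.opNorm_le_bound zero_le_one fun a => ?_) ?_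
  · simpa using norm_apply_le_of_map_mul hmul a
  · simpa [h1] using φ.unit_le_opNorm 1 hA

end Multiplicative

section States

variable {R F : Type*} [Ring R] [Algebra ℝ R] [FunLike F R ℝ] [LinearMapClass F ℝ R ℝ]

lemma sq_apply_le_apply_mul_self {ψ : F} (h1 : ψ 1 = 1) (hsq : ∀ g, 0 ≤ ψ (g * g)) (a : R) :
    ψ a ^ 2 ≤ ψ (a * a) := by
  have := hsq (a - ψ a • 1)
  simp only [sub_mul, mul_sub, smul_mul_assoc, mul_smul_comm, one_mul, mul_one,
    map_sub, map_smul, h1, smul_eq_mul] at this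
  nlinarith

lemma apply_eq_of_eq_midpoint {φ ψ₁ ψ₂ : F} (hmul : ∀ a b, φ (a * b) = φ a * φ b)
    (hψ₁1 : ψ₁ 1 = 1) (hψ₁sq : ∀ g, 0 ≤ ψ₁ (g * g)) (hψ₂1 : ψ₂ 1 = 1)
    (hψ₂sq : ∀ g, 0 ≤ ψ₂ (g * g)) (hmid : ∀ a, φ a = (ψ₁ a + ψ₂ a) / 2) (a : R) :
    ψ₁ a = φ a := by
  have hφ1 : φ 1 = 1 := by rw [hmid, hψ₁1, hψ₂1]; norm_num
  set b := a - φ a • 1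
  have hφb : φ b = 0 := by simp [b, hφ1]
  have hψ₁b : ψ₁ (b * b) = 0 := by
    have := hmid (b * b)
    rw [hmul, hφb, mul_zero] at this
    linarith [hψ₁sq b, hψ₂sq b]
  have : ψ₁ b = 0 := by nlinarith [sq_apply_le_apply_mul_self hψ₁1 hψ₁sq b]
  simpa [b, hψ₁1, sub_eq_zero] using this

end States

section BoundedContinuous

variable {X : Type*} [TopologicalSpace X]

lemma BoundedContinuousFunction.norm_sub_norm_smul_one_le {f : X →ᵇ ℝ} (hf : ∀ x, 0 ≤ f x) :
    ‖f - ‖f‖ • 1‖ ≤ ‖f‖ :=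
  (norm_le (norm_nonneg f)).mpr fun x => by
    have := f.apply_le_norm x
    simp only [coe_sub, coe_smul, coe_one, Pi.sub_apply, Pi.one_apply, smul_eq_mul,
      mul_one, Real.norm_eq_abs, abs_sub_le_iff]
    constructor <;> linarith [hf x]

lemma Subalgebra.norm_one_le (A : Subalgebra ℝ (X →ᵇ ℝ)) : ‖(1 : A)‖ ≤ 1 :=
  (norm_le zero_le_one).mpr fun x => by simp

lemma apply_nonneg_of_opNorm_le_one {A : Subalgebra ℝ (X →ᵇ ℝ)} {ψ : NormedSpace.Dual ℝ A}
    (hψ : ‖ψ‖ ≤ 1) (h1 : ψ 1 = 1) {f : A} (hf : ∀ x, 0 ≤ (f : X →ᵇ ℝ) x) : 0 ≤ ψ f := by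
  have : |ψ f - ‖f‖| ≤ ‖f‖ := calc
    |ψ f - ‖f‖| = ‖ψ (f - ‖f‖ • 1)‖ := by
      rw [ψ.map_sub, ψ.map_smul, h1, smul_eq_mul, mul_one, Real.norm_eq_abs]
    _ ≤ ‖ψ‖ * ‖f - ‖f‖ • 1‖ := ψ.le_opNorm _
    _ ≤ 1 * ‖f‖ := by
      gcongr
      exact BoundedContinuousFunction.norm_sub_norm_smul_one_le hf
    _ = ‖f‖ := one_mul _
  linarith [(abs_le.mp this).1]

lemma apply_mul_self_nonneg_of_mem_stateSet {A : Subalgebra ℝ (X →ᵇ ℝ)}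
    {ψ : NormedSpace.Dual ℝ A} (hψ : ψ ∈ stateSet A) (g : A) : 0 ≤ ψ (g * g) :=
  hψ.2.2 _ fun x => by simpa using mul_self_nonneg ((g : X →ᵇ ℝ) x)

end BoundedContinuous

theorem stmt5 {X : Type*} [TopologicalSpace X]
    (A : Subalgebra ℝ (BoundedContinuousFunction X ℝ))
    (φ : NormedSpace.Dual ℝ A)
    (hφ0 : φ ≠ 0)
    (hφmul : ∀ f g : A, φ (f * g) = φ f * φ g) :
    (∀ f : A, (∀ x, 0 ≤ (f : BoundedContinuousFunction X ℝ) x) → 0 ≤ φ f) ∧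
    φ 1 = 1 ∧
    ‖φ‖ = 1 ∧
    φ ∈ stateSet A ∧
    ∀ ψ₁ ∈ stateSet A, ∀ ψ₂ ∈ stateSet A,
      φ = (1 / 2 : ℝ) • ψ₁ + (1 / 2 : ℝ) • ψ₂ → ψ₁ = ψ₂ := by
  obtain ⟨a, ha⟩ := DFunLike.ne_iff.mp hφ0
  have h1 : φ 1 = 1 := map_one_eq_one_of_map_mul hφmul ha
  have hnorm : ‖φ‖ = 1 := opNorm_eq_one_of_map_mul hφmul h1 A.norm_one_le
  have hpos : ∀ f : A, (∀ x, 0 ≤ (f : X →ᵇ ℝ) x) → 0 ≤ φ f :=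
    fun f => apply_nonneg_of_opNorm_le_one hnorm.le h1
  refine ⟨hpos, h1, hnorm, ⟨hnorm.le, h1, hpos⟩, fun ψ₁ hψ₁ ψ₂ hψ₂ hmid => ?_⟩
  have hmid' : ∀ f, φ f = (ψ₁ f + ψ₂ f) / 2 := fun f => by
    simp only [hmid, one_div, _root_.add_apply, _root_.smul_apply, smul_eq_mul]
    ring
  have hsq₁ := apply_mul_self_nonneg_of_mem_stateSet hψ₁
  have hsq₂ := apply_mul_self_nonneg_of_mem_stateSet hψ₂
  ext f
  rw [apply_eq_of_eq_midpoint hφmul hψ₁.2.1 hsq₁ hψ₂.2.1 hsq₂ hmid' f,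
    apply_eq_of_eq_midpoint hφmul hψ₂.2.1 hsq₂ hψ₁.2.1 hsq₁ (fun f => by rw [hmid', add_comm]) f]
end

section
/- Let (X,τ) be a compact Hausdorff space, q ∈ (1,∞), t > 0, f : X → ℝ continuous, I a directed set, and (d_i)_{i∈I} a family of continuous pseudometrics on X with d_i ≤ d_j pointwise whenever i ≤ j; set d(x,y) := sup_{i∈I} d_i(x,y) ∈ [0,∞]. For an extended semidistance or pseudometric δ put Q^δ_t f(x) := inf_{y∈X} [ f(y) + δ(x,y)^q/(q t^{q−1}) ] (the summand is +∞ when δ(x,y) = ∞). Then for every x ∈ X the net i ↦ Q^{d_i}_t f(x) is nondecreasing and sup_{i∈I} Q^{d_i}_t f(x) = Q^{d}_t f(x). -/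
open Filter Set Topology
open scoped ENNReal

/-- The Hopf–Lax operator at time `t > 0` with exponent `q`, for the extended
(semi)distance `δ`:  `Q_t f (x) = inf_y [ f y + δ(x,y)^q / (q t^(q-1)) ]`,
where the infimum is effectively taken over the points `y` with `δ x y < ∞`
(the summand is interpreted as `+∞` when `δ x y = ∞`). -/
noncomputable def HL {X : Type*} (q t : ℝ) (f : X → ℝ) (δ : X → X → ℝ≥0∞) (x : X) : ℝ :=
  sInf {v : ℝ | ∃ y, δ x y ≠ ⊤ ∧ v = f y + (δ x y).toReal ^ q / (q * t ^ (q - 1))}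

theorem stmt12 {X : Type*} [TopologicalSpace X] [T2Space X] [CompactSpace X]
    (q : ℝ) (hq1 : 1 < q) (t : ℝ) (ht : 0 < t)
    (f : X → ℝ) (hf : Continuous f)
    {I : Type*} [Preorder I] [Nonempty I] [IsDirected I (· ≤ ·)]
    (ρ : I → X → X → ℝ)
    (hcont : ∀ i, Continuous (fun p : X × X => ρ i p.1 p.2))
    (hnn : ∀ i x y, 0 ≤ ρ i x y)
    (h0 : ∀ i x, ρ i x x = 0)
    (hsymm : ∀ i x y, ρ i x y = ρ i y x)
    (htri : ∀ i x y z, ρ i x z ≤ ρ i x y + ρ i y z)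
    (hmono : ∀ i j, i ≤ j → ∀ x y, ρ i x y ≤ ρ j x y)
    (x : X) :
    Monotone (fun i => HL q t f (fun x y => ENNReal.ofReal (ρ i x y)) x) ∧
    (⨆ i, HL q t f (fun x y => ENNReal.ofReal (ρ i x y)) x) =
      HL q t f (fun x y => ⨆ i, ENNReal.ofReal (ρ i x y)) x := by
  have hq0 : (0:ℝ) < q := by linarith
  have hXne : Nonempty X := ⟨x⟩
  set c : ℝ := q * t ^ (q - 1) with hc_def
  have hc : 0 < c := mul_pos hq0 (Real.rpow_pos_of_pos ht _)
  -- the finite Hopf–Lax integrands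
  set g : I → X → ℝ := fun i y => f y + ρ i x y ^ q / c with hg_def
  have hgcont : ∀ i, Continuous (g i) := by
    intro i
    have h1 : Continuous (fun y => ρ i x y) :=
      (hcont i).comp (continuous_const.prodMk continuous_id)
    exact hf.add ((h1.rpow_const (fun y => Or.inr hq0.le)).div_const c)
  -- HL for the finite pseudometrics equals ⨅ g i
  have hHL : ∀ i, HL q t f (fun x y => ENNReal.ofReal (ρ i x y)) x = ⨅ y, g i y := by
    intro i
    unfold HL
    rw [iInf, ← hc_def]
    congr 1
    ext v
    constructor
    · rintro ⟨y, -, rfl⟩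
      exact ⟨y, by simp [hg_def, ENNReal.toReal_ofReal (hnn i x y)]⟩
    · rintro ⟨y, rfl⟩
      exact ⟨y, ENNReal.ofReal_ne_top, by simp [hg_def, ENNReal.toReal_ofReal (hnn i x y)]⟩
  -- a uniform lower bound: a minimum point of f
  obtain ⟨y₀, -, hy₀⟩ := isCompact_univ.exists_isMinOn univ_nonempty hf.continuousOn
  have hlow : ∀ i y, f y₀ ≤ g i y := by
    intro i y
    have h1 : 0 ≤ ρ i x y ^ q / c :=
      div_nonneg (Real.rpow_nonneg (hnn i x y) q) hc.le
    have h2 : f y₀ ≤ f y := hy₀ (mem_univ y)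
    simp only [hg_def]
    linarith
  have hbdd : ∀ i, BddBelow (Set.range (g i)) := by
    intro i
    exact ⟨f y₀, by rintro v ⟨y, rfl⟩; exact hlow i y⟩
  have hgmono : ∀ i j, i ≤ j → ∀ y, g i y ≤ g j y := by
    intro i j hij y
    have hr : ρ i x y ^ q ≤ ρ j x y ^ q :=
      Real.rpow_le_rpow (hnn i x y) (hmono i j hij x y) hq0.le
    simp only [hg_def]
    have := div_le_div_of_nonneg_right hr hc.le
    linarith
  have hmonoHL : Monotone (fun i => HL q t f (fun x y => ENNReal.ofReal (ρ i x y)) x) := by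
    intro i j hij
    simp only [hHL]
    exact le_ciInf fun y => (ciInf_le (hbdd i) y).trans (hgmono i j hij y)
  refine ⟨hmonoHL, ?_⟩
  -- upper bound f x for all the finite HL's
  have hub : ∀ i, HL q t f (fun x y => ENNReal.ofReal (ρ i x y)) x ≤ f x := by
    intro i
    rw [hHL i]
    exact (ciInf_le (hbdd i) x).trans_eq
      (by simp [hg_def, h0, Real.zero_rpow hq0.ne'])
  have hbddA : BddAbove (Set.range fun i => HL q t f (fun x y => ENNReal.ofReal (ρ i x y)) x) :=
    ⟨f x, by rintro v ⟨i, rfl⟩; exact hub i⟩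
  set S : ℝ := ⨆ i, HL q t f (fun x y => ENNReal.ofReal (ρ i x y)) x with hS_def
  have hleS : ∀ i, HL q t f (fun x y => ENNReal.ofReal (ρ i x y)) x ≤ S :=
    fun i => le_ciSup hbddA i
  set D : X → ℝ≥0∞ := fun y => ⨆ i, ENNReal.ofReal (ρ i x y) with hD_def
  set Sd : Set ℝ := {v : ℝ | ∃ y, D y ≠ ⊤ ∧ v = f y + (D y).toReal ^ q / c} with hSd_def
  have hHLd : HL q t f (fun x y => ⨆ i, ENNReal.ofReal (ρ i x y)) x = sInf Sd := by
    unfold HL; rw [← hc_def]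
  have hDx : D x = 0 := by
    simp [hD_def, h0]
  have hSdne : Sd.Nonempty := by
    refine ⟨f x + (D x).toReal ^ q / c, x, ?_, rfl⟩
    simp [hDx]
  have hSdbdd : BddBelow Sd := by
    refine ⟨f y₀, ?_⟩
    rintro v ⟨y, -, rfl⟩
    have h1 : 0 ≤ (D y).toReal ^ q / c :=
      div_nonneg (Real.rpow_nonneg ENNReal.toReal_nonneg q) hc.le
    have h2 : f y₀ ≤ f y := hy₀ (mem_univ y)
    linarith
  rw [hHLd]
  apply le_antisymm
  · -- S ≤ sInf Sd
    refine le_csInf hSdne ?_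
    rintro v ⟨y, hy, rfl⟩
    refine ciSup_le fun i => ?_
    rw [hHL i]
    refine (ciInf_le (hbdd i) y).trans ?_
    have h1 : ρ i x y ≤ (D y).toReal := by
      have : ENNReal.ofReal (ρ i x y) ≤ D y := le_iSup (fun i => ENNReal.ofReal (ρ i x y)) i
      have := ENNReal.toReal_mono hy this
      rwa [ENNReal.toReal_ofReal (hnn i x y)] at this
    have hr : ρ i x y ^ q ≤ (D y).toReal ^ q :=
      Real.rpow_le_rpow (hnn i x y) h1 hq0.le
    have := div_le_div_of_nonneg_right hr hc.le
    simp only [hg_def]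
    linarith
  · -- sInf Sd ≤ S : use compactness
    set K : I → Set X := fun i => {y | g i y ≤ S} with hK_def
    have hKne : ∀ i, (K i).Nonempty := by
      intro i
      obtain ⟨yi, -, hyi⟩ := isCompact_univ.exists_isMinOn univ_nonempty (hgcont i).continuousOn
      refine ⟨yi, ?_⟩
      have h1 : g i yi ≤ ⨅ z, g i z := le_ciInf fun z => hyi (mem_univ z)
      exact h1.trans ((hHL i ▸ hleS i))
    have hKcl : ∀ i, IsClosed (K i) := fun i => isClosed_le (hgcont i) continuous_const
    have hKd : Directed (· ⊇ ·) K := by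
      intro i j
      obtain ⟨k, hik, hjk⟩ := directed_of (· ≤ ·) i j
      exact ⟨k, fun y hy => (hgmono i k hik y).trans hy,
             fun y hy => (hgmono j k hjk y).trans hy⟩
    obtain ⟨y, hy⟩ := IsCompact.nonempty_iInter_of_directed_nonempty_isCompact_isClosed K hKd
      hKne (fun i => (hKcl i).isCompact) hKcl
    simp only [mem_iInter] at hy
    set B : ℝ := c * (S - f y) with hB_def
    have hBi : ∀ i, ρ i x y ^ q ≤ B := by
      intro i
      have h := hy i
      simp only [hK_def, hg_def, mem_setOf_eq] at h
      have h2 := (div_le_iff₀ hc).mp (by linarith : ρ i x y ^ q / c ≤ S - f y)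
      rw [hB_def, mul_comm]
      exact h2
    have hB0 : 0 ≤ B := le_trans (Real.rpow_nonneg (hnn (Classical.arbitrary I) x y) q)
      (hBi (Classical.arbitrary I))
    have hρB : ∀ i, ρ i x y ≤ B ^ q⁻¹ := by
      intro i
      have h1 : (ρ i x y ^ q) ^ q⁻¹ ≤ B ^ q⁻¹ :=
        Real.rpow_le_rpow (Real.rpow_nonneg (hnn i x y) q) (hBi i) (by positivity)
      rwa [Real.rpow_rpow_inv (hnn i x y) hq0.ne'] at h1
    have hDyle : D y ≤ ENNReal.ofReal (B ^ q⁻¹) :=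
      iSup_le fun i => ENNReal.ofReal_le_ofReal (hρB i)
    have hDyne : D y ≠ ⊤ := ne_top_of_le_ne_top ENNReal.ofReal_ne_top hDyle
    have htR : (D y).toReal ≤ B ^ q⁻¹ :=
      ENNReal.toReal_le_of_le_ofReal (Real.rpow_nonneg hB0 _) hDyle
    have hpow : (D y).toReal ^ q ≤ B := by
      have h1 : (D y).toReal ^ q ≤ (B ^ q⁻¹) ^ q :=
        Real.rpow_le_rpow ENNReal.toReal_nonneg htR hq0.le
      rwa [Real.rpow_inv_rpow hB0 hq0.ne'] at h1
    have hvS : f y + (D y).toReal ^ q / c ≤ S := by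
      have h1 : (D y).toReal ^ q / c ≤ B / c := div_le_div_of_nonneg_right hpow hc.le
      have h2 : B / c = S - f y := by rw [hB_def, mul_div_assoc]; field_simp
      linarith
    exact (csInf_le hSdbdd ⟨y, hDyne, rfl⟩).trans hvS
end

section
/- Let (X,τ) be a Hausdorff topological space, m a finite Radon measure on X, and p ∈ (1,∞). Let f_n, f : X → [0,∞] be Borel functions with ∫_X f_n^p dm < ∞ for all n, ∫_X f^p dm < ∞, and ∫_X |f_n − f|^p dm → 0 as n → ∞. Then there exist a subsequence (f_{n_k}) and a family Σ of finite Radon measures on X with Mod_p(Σ) = 0 such that lim_{k→∞} ∫_X |f_{n_k} − f| dμ = 0 for every finite Radon measure μ on X not belonging to Σ. -/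
open Filter Set Topology MeasureTheory
open scoped ENNReal

/-- The `p`-modulus (with respect to the reference measure `m`) of a family `S`
of measures on `X`. -/
noncomputable def Modp {X : Type*} [MeasurableSpace X] (m : Measure X) (p : ℝ)
    (S : Set (Measure X)) : ℝ≥0∞ :=
  ⨅ h ∈ {h : X → ℝ≥0∞ | Measurable h ∧ ∀ μ ∈ S, 1 ≤ ∫⁻ x, h x ∂μ},
    ∫⁻ x, h x ^ p ∂m

/-- The "absolute difference" of two extended nonnegative reals. -/
noncomputable def ediff (a b : ℝ≥0∞) : ℝ≥0∞ := (a - b) + (b - a)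

/-!
Pass to a subsequence along which `∑ₖ ‖f_{n_k} - f‖_p < ∞`. By Minkowski's
inequality `G := ∑ₖ |f_{n_k} - f|` is then in `L^p(m)`, so every multiple `εG` is admissible for
the family `Σ` of measures `μ` with `∫ G dμ = ∞`, whence `Mod_p(Σ) ≤ ε^p ∫ G^p dm → 0`. For
`μ ∉ Σ` the series `∑ₖ ∫ |f_{n_k} - f| dμ = ∫ G dμ` converges, so its terms tend to `0`.
-/

lemma Measurable.ediff {X : Type*} [MeasurableSpace X] {f g : X → ℝ≥0∞}
    (hf : Measurable f) (hg : Measurable g) : Measurable fun x => ediff (f x) (g x) :=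
  (hf.sub hg).add (hg.sub hf)

lemma ENNReal.exists_strictMono_tsum_ne_top {a : ℕ → ℝ≥0∞} (ha : Tendsto a atTop (𝓝 0)) :
    ∃ φ : ℕ → ℕ, StrictMono φ ∧ ∑' k, a (φ k) ≠ ⊤ := by
  have hev : ∀ k : ℕ, ∀ᶠ n in atTop, a n ≤ 2⁻¹ ^ k := fun k =>
    (ha.eventually_lt_const (ENNReal.pow_pos (ENNReal.inv_pos.2 ENNReal.ofNat_ne_top) k)).mono
      fun n hn => hn.le
  obtain ⟨φ, hφ, hφa⟩ := Filter.extraction_forall_of_eventually hev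
  refine ⟨φ, hφ, ne_top_of_le_ne_top ?_ (ENNReal.tsum_le_tsum hφa)⟩
  rw [ENNReal.tsum_geometric, ENNReal.one_sub_inv_two, inv_inv]
  exact ENNReal.ofNat_ne_top

namespace MeasureTheory

variable {X : Type*} [MeasurableSpace X]

lemma lintegral_finset_sum_rpow_le {p : ℝ} (hp : 1 ≤ p) (m : Measure X)
    {u : ℕ → X → ℝ≥0∞} (hu : ∀ i, Measurable (u i)) (n : ℕ) :
    (∫⁻ x, (∑ i ∈ Finset.range n, u i x) ^ p ∂m) ^ (1 / p) ≤
      ∑ i ∈ Finset.range n, (∫⁻ x, u i x ^ p ∂m) ^ (1 / p) := by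
  have hp0 : 0 < p := zero_lt_one.trans_le hp
  induction n with
  | zero => simp [ENNReal.zero_rpow_of_pos hp0, hp0]
  | succ n ih =>
    simp only [Finset.sum_range_succ]
    exact (ENNReal.lintegral_Lp_add_le (Finset.measurable_sum _ fun i _ => hu i).aemeasurable
      (hu n).aemeasurable hp).trans (add_le_add ih le_rfl)

lemma lintegral_tsum_rpow_le {p : ℝ} (hp : 1 ≤ p) (m : Measure X)
    {u : ℕ → X → ℝ≥0∞} (hu : ∀ i, Measurable (u i)) :
    (∫⁻ x, (∑' i, u i x) ^ p ∂m) ^ (1 / p) ≤ ∑' i, (∫⁻ x, u i x ^ p ∂m) ^ (1 / p) := by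
  have hp0 : 0 < p := zero_lt_one.trans_le hp
  have hpow_iSup (q : ℝ) (hq : 0 < q) (s : ℕ → ℝ≥0∞) : (⨆ n, s n) ^ q = ⨆ n, s n ^ q :=
    (ENNReal.orderIsoRpow q hq).map_iSup s
  have hmono : Monotone fun n x => (∑ i ∈ Finset.range n, u i x) ^ p := fun a b hab x =>
    ENNReal.rpow_le_rpow (Finset.sum_le_sum_of_subset (Finset.range_mono hab)) hp0.le
  simp_rw [ENNReal.tsum_eq_iSup_nat, hpow_iSup p hp0]
  rw [lintegral_iSup (fun n => (Finset.measurable_sum _ fun i _ => hu i).pow_const p) hmono,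
    hpow_iSup _ (one_div_pos.mpr hp0)]
  exact iSup_mono fun n => lintegral_finset_sum_rpow_le hp m hu n

lemma Modp_le_lintegral_rpow (m : Measure X) (p : ℝ) {S : Set (Measure X)} {h : X → ℝ≥0∞}
    (hh : Measurable h) (hS : ∀ μ ∈ S, 1 ≤ ∫⁻ x, h x ∂μ) : Modp m p S ≤ ∫⁻ x, h x ^ p ∂m :=
  iInf₂_le h ⟨hh, hS⟩

lemma Modp_setOf_lintegral_eq_top {p : ℝ} (hp : 0 < p) (m : Measure X) {G : X → ℝ≥0∞}
    (hG : Measurable G) (hGp : ∫⁻ x, G x ^ p ∂m ≠ ⊤) :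
    Modp m p {μ | ∫⁻ x, G x ∂μ = ⊤} = 0 := by
  have hbound (c : ℝ≥0∞) (hc : c ≠ 0) :
      Modp m p {μ | ∫⁻ x, G x ∂μ = ⊤} ≤ c ^ p * ∫⁻ x, G x ^ p ∂m := by
    calc Modp m p {μ | ∫⁻ x, G x ∂μ = ⊤} ≤ ∫⁻ x, (c * G x) ^ p ∂m := by
          refine Modp_le_lintegral_rpow m p (hG.const_mul c) fun μ hμ => ?_
          rw [lintegral_const_mul c hG, (hμ : ∫⁻ x, G x ∂μ = ⊤), ENNReal.mul_top hc]
          exact le_top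
      _ = c ^ p * ∫⁻ x, G x ^ p ∂m := by
          simp_rw [ENNReal.mul_rpow_of_nonneg _ _ hp.le]
          exact lintegral_const_mul _ (hG.pow_const p)
  have hlim : Tendsto (fun n : ℕ => ((n : ℝ≥0∞)⁻¹) ^ p * ∫⁻ x, G x ^ p ∂m) atTop (𝓝 0) := by
    have h := ((ENNReal.continuous_rpow_const (y := p)).tendsto 0).comp
      ENNReal.tendsto_inv_nat_nhds_zero
    rw [ENNReal.zero_rpow_of_pos hp] at h
    simpa using ENNReal.Tendsto.mul_const h (Or.inr hGp)
  exact nonpos_iff_eq_zero.mp <| ge_of_tendsto' hlim fun n =>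
    hbound _ (ENNReal.inv_ne_zero.mpr (ENNReal.natCast_ne_top n))

lemma exists_Modp_eq_zero_tendsto_lintegral {p : ℝ} (hp : 1 ≤ p) (m : Measure X)
    {g : ℕ → X → ℝ≥0∞} (hg : ∀ k, Measurable (g k))
    (hsum : ∑' k, (∫⁻ x, g k x ^ p ∂m) ^ (1 / p) ≠ ⊤) :
    ∃ S : Set (Measure X), Modp m p S = 0 ∧
      ∀ μ ∉ S, Tendsto (fun k => ∫⁻ x, g k x ∂μ) atTop (𝓝 0) := by
  have hp0 : 0 < p := zero_lt_one.trans_le hp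
  set G : X → ℝ≥0∞ := fun x => ∑' k, g k x
  have hGp : ∫⁻ x, G x ^ p ∂m ≠ ⊤ := by
    have hnorm := (lintegral_tsum_rpow_le hp m hg).trans_lt hsum.lt_top
    rwa [ENNReal.rpow_lt_top_iff_of_pos (one_div_pos.mpr hp0), lt_top_iff_ne_top] at hnorm
  refine ⟨{μ | ∫⁻ x, G x ∂μ = ⊤},
    Modp_setOf_lintegral_eq_top hp0 m (Measurable.tsum hg) hGp, fun μ hμ => ?_⟩
  have hμ' : ∫⁻ x, G x ∂μ ≠ ⊤ := hμ
  rw [lintegral_tsum fun k => (hg k).aemeasurable] at hμ'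
  exact ENNReal.tendsto_atTop_zero_of_tsum_ne_top hμ'

end MeasureTheory

theorem stmt14_general {X : Type*} [TopologicalSpace X] [MeasurableSpace X]
    (m : Measure X)
    (p : ℝ) (hp : 1 < p)
    (f : ℕ → X → ℝ≥0∞) (flim : X → ℝ≥0∞)
    (hfm : ∀ n, Measurable (f n)) (hflimm : Measurable flim)
    (hconv : Tendsto (fun n => ∫⁻ x, ediff (f n x) (flim x) ^ p ∂m) atTop (𝓝 0)) :
    ∃ φ : ℕ → ℕ, StrictMono φ ∧
      ∃ S : Set (Measure X), Modp m p S = 0 ∧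
        ∀ μ : Measure X, IsFiniteMeasure μ → μ.InnerRegular → μ ∉ S →
          Tendsto (fun k => ∫⁻ x, ediff (f (φ k) x) (flim x) ∂μ) atTop (𝓝 0) := by
  have hnorm : Tendsto (fun n => (∫⁻ x, ediff (f n x) (flim x) ^ p ∂m) ^ (1 / p)) atTop (𝓝 0) := by
    have h := ((ENNReal.continuous_rpow_const (y := 1 / p)).tendsto 0).comp hconv
    rwa [ENNReal.zero_rpow_of_pos (one_div_pos.mpr (zero_lt_one.trans hp))] at h
  obtain ⟨φ, hφ, hsum⟩ := ENNReal.exists_strictMono_tsum_ne_top hnorm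
  obtain ⟨S, hS, hlim⟩ := exists_Modp_eq_zero_tendsto_lintegral hp.le m
    (fun k => (hfm (φ k)).ediff hflimm) hsum
  exact ⟨φ, hφ, S, hS, fun μ _ _ hμ => hlim μ hμ⟩

theorem stmt14 {X : Type*} [TopologicalSpace X] [T2Space X] [MeasurableSpace X] [BorelSpace X]
    (m : Measure X) [IsFiniteMeasure m] [m.InnerRegular]
    (p : ℝ) (hp : 1 < p)
    (f : ℕ → X → ℝ≥0∞) (flim : X → ℝ≥0∞)
    (hfm : ∀ n, Measurable (f n)) (hflimm : Measurable flim)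
    (hfint : ∀ n, ∫⁻ x, f n x ^ p ∂m ≠ ⊤) (hflimint : ∫⁻ x, flim x ^ p ∂m ≠ ⊤)
    (hconv : Tendsto (fun n => ∫⁻ x, ediff (f n x) (flim x) ^ p ∂m) atTop (𝓝 0)) :
    ∃ φ : ℕ → ℕ, StrictMono φ ∧
      ∃ S : Set (Measure X), Modp m p S = 0 ∧
        ∀ μ : Measure X, IsFiniteMeasure μ → μ.InnerRegular → μ ∉ S →
          Tendsto (fun k => ∫⁻ x, ediff (f (φ k) x) (flim x) ∂μ) atTop (𝓝 0) :=
  stmt14_general m p hp f flim hfm hflimm hconv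
end

section
/- Let V and W be real vector spaces, A ⊆ V and B ⊆ W convex sets, and L : A × B → ℝ a function such that a ↦ L(a,b) is concave on A for every b ∈ B and b ↦ L(a,b) is convex on B for every a ∈ A. Assume B carries a Hausdorff topology and that there exist a⋆ ∈ A and C⋆ ∈ ℝ with C⋆ > sup_{a∈A} inf_{b∈B} L(a,b) such that the set B⋆ := { b ∈ B : L(a⋆,b) ≤ C⋆ } is nonempty and compact and, for every a ∈ A, the restriction of b ↦ L(a,b) to B⋆ is lower semicontinuous. Then inf_{b∈B} sup_{a∈A} L(a,b) = sup_{a∈A} inf_{b∈B} L(a,b) (equality in [−∞,+∞]), and the infimum on the left-hand side is attained at some b̄ ∈ B. -/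
open Filter Set Topology

/-- Closed sublevel sets of a function lower semicontinuous on a closed set. -/
lemma closed_sublevel {W : Type*} [TopologicalSpace W] {f : W → ℝ} {s : Set W}
    (hs : IsClosed s) (hf : LowerSemicontinuousOn f s) (c : ℝ) :
    IsClosed {x ∈ s | f x ≤ c} := by
  refine isClosed_of_closure_subset fun x hx => ?_
  have hxs : x ∈ s := hs.closure_subset (closure_mono (fun y hy => hy.1) hx)
  refine ⟨hxs, ?_⟩
  by_contra h
  push_neg at h
  have hev := hf x hxs c h
  rw [eventually_nhdsWithin_iff] at hev
  obtain ⟨z, hz1, hz2⟩ := mem_closure_iff_nhds.mp hx _ hev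
  exact absurd (hz1 hz2.1) (not_lt.2 hz2.2)

/-- Core separation lemma: either a finite family of concave functions has a common
sublevel point in `B`, or some convex combination is everywhere `≥ c` on `B`. -/
lemma sep_core {V W : Type*} [AddCommGroup V] [Module ℝ V]
    [AddCommGroup W] [Module ℝ W]
    (A : Set V) (B : Set W) (hA : Convex ℝ A) (hB : Convex ℝ B)
    (L : V → W → ℝ)
    (hconc : ∀ b ∈ B, ConcaveOn ℝ A fun a => L a b)
    (hconv : ∀ a ∈ A, ConvexOn ℝ B (L a))
    {ι : Type*} [Fintype ι] [Nonempty ι] [DecidableEq ι]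
    (a : ι → V) (ha : ∀ i, a i ∈ A) (c : ℝ) (hBne : B.Nonempty) :
    (∃ b ∈ B, ∀ i, L (a i) b ≤ c) ∨ (∃ a₀ ∈ A, ∀ b ∈ B, c ≤ L a₀ b) := by
  by_cases hex : ∃ b ∈ B, ∀ i, L (a i) b ≤ c
  · exact Or.inl hex
  right
  push_neg at hex
  -- separate the open box `{y | ∀ i, y i < c}` from the "epigraph image" C
  set s : Set (ι → ℝ) := Set.univ.pi fun _ => Set.Iio c with hsdef
  set C : Set (ι → ℝ) := {y | ∃ b ∈ B, ∀ i, L (a i) b ≤ y i} with hCdef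
  have hsconv : Convex ℝ s := convex_pi fun _ _ => convex_Iio c
  have hsopen : IsOpen s := isOpen_set_pi Set.finite_univ fun _ _ => isOpen_Iio
  have hCconv : Convex ℝ C := by
    rintro y ⟨b, hb, hby⟩ y' ⟨b', hb', hby'⟩ p q hp hq hpq
    refine ⟨p • b + q • b', hB hb hb' hp hq hpq, fun i => ?_⟩
    have h1 := (hconv _ (ha i)).2 hb hb' hp hq hpq
    simp only [smul_eq_mul] at h1 ⊢
    have h2 : p * L (a i) b + q * L (a i) b' ≤ p * y i + q * y' i :=
      add_le_add (mul_le_mul_of_nonneg_left (hby i) hp)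
        (mul_le_mul_of_nonneg_left (hby' i) hq)
    calc L (a i) (p • b + q • b') ≤ p * L (a i) b + q * L (a i) b' := h1
      _ ≤ _ := h2
  have hdisj : Disjoint s C := by
    rw [Set.disjoint_left]
    rintro y hy ⟨b, hb, hby⟩
    obtain ⟨i, hi⟩ := hex b hb
    have h1 : y i < c := hy i (Set.mem_univ i)
    have h2 : L (a i) b ≤ y i := hby i
    linarith
  obtain ⟨f, u, hfs, hfC⟩ := geometric_hahn_banach_open hsconv hsopen hCconv hdisj
  set e : ι → (ι → ℝ) := fun i j => if i = j then 1 else 0 with hedef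
  set lam : ι → ℝ := fun i => f (e i) with hlamdef
  have hf_eq : ∀ y : ι → ℝ, f y = ∑ i, y i * lam i := by
    intro y
    conv_lhs => rw [pi_eq_sum_univ y]
    rw [map_sum]
    exact Finset.sum_congr rfl fun i _ => by rw [map_smul, smul_eq_mul]
  obtain ⟨b₀, hb₀⟩ := hBne
  set y₀ : ι → ℝ := fun i => L (a i) b₀ with hy₀def
  have hy₀ : y₀ ∈ C := ⟨b₀, hb₀, fun i => le_refl _⟩
  have huy₀ : u ≤ f y₀ := hfC y₀ hy₀
  have hlam_nonneg : ∀ i, 0 ≤ lam i := by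
    intro i
    by_contra h
    push_neg at h
    have key : ∀ t : ℝ, 0 ≤ t → u ≤ f y₀ + t * lam i := by
      intro t ht
      have hmem : (y₀ + t • e i) ∈ C := by
        refine ⟨b₀, hb₀, fun j => ?_⟩
        have h0 : (0:ℝ) ≤ t * (if i = j then 1 else 0) := by positivity
        simp only [Pi.add_apply, Pi.smul_apply, smul_eq_mul, hedef, hy₀def]
        linarith
      have h2 := hfC _ hmem
      rwa [map_add, map_smul, smul_eq_mul] at h2
    have hne : -lam i ≠ 0 := by linarith
    set t : ℝ := (f y₀ + 1 - u) / (-lam i) with htdef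
    have ht0 : 0 ≤ t := div_nonneg (by linarith) (by linarith)
    have h2 := key t ht0
    have htl : t * lam i = -(f y₀ + 1 - u) := by
      have h3 : t * lam i = -(((f y₀ + 1 - u) / (-lam i)) * (-lam i)) := by
        rw [htdef]; ring
      rw [div_mul_cancel₀ _ hne] at h3
      exact h3
    linarith
  set sl : ℝ := ∑ i, lam i with hsldef
  have hsl_nonneg : 0 ≤ sl := Finset.sum_nonneg fun i _ => hlam_nonneg i
  have hconst : ∀ r : ℝ, r < c → r * sl < u := by
    intro r hr
    have hmem : (fun _ : ι => r) ∈ s := fun i _ => hr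
    have h2 := hfs _ hmem
    rw [hf_eq] at h2
    calc r * sl = ∑ i, r * lam i := by rw [hsldef, Finset.mul_sum]
      _ < u := h2
  have hslpos : 0 < sl := by
    rcases lt_or_eq_of_le hsl_nonneg with h | h
    · exact h
    have hall : ∀ i ∈ Finset.univ, lam i = 0 :=
      (Finset.sum_eq_zero_iff_of_nonneg fun i _ => hlam_nonneg i).mp h.symm
    have h0 : f y₀ = 0 := by
      rw [hf_eq]
      exact Finset.sum_eq_zero fun i _ => by rw [hall i (Finset.mem_univ i), mul_zero]
    have h1 := hconst (c - 1) (by linarith)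
    rw [← h] at h1
    rw [h0] at huy₀
    linarith
  have hcu : c * sl ≤ u := by
    by_contra h
    push_neg at h
    set d : ℝ := (c * sl - u) / (2 * sl) with hddef
    have hd_pos : 0 < d := div_pos (by linarith) (by linarith)
    have h1 := hconst (c - d) (by linarith)
    have hd2 : d * sl = (c * sl - u) / 2 := by
      rw [hddef]
      field_simp
    nlinarith
  set w : ι → ℝ := fun i => lam i / sl with hwdef
  have hw_nonneg : ∀ i ∈ Finset.univ, 0 ≤ w i := fun i _ =>
    div_nonneg (hlam_nonneg i) hsl_nonneg
  have hw_sum : ∑ i, w i = 1 := by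
    rw [hwdef]
    simp only
    rw [← Finset.sum_div, ← hsldef, div_self (ne_of_gt hslpos)]
  refine ⟨∑ i, w i • a i, hA.sum_mem hw_nonneg hw_sum fun i _ => ha i, fun b hb => ?_⟩
  have hJ := (hconc b hb).le_map_sum hw_nonneg hw_sum fun i _ => ha i
  have hX : u ≤ ∑ i, L (a i) b * lam i := by
    have h2 := hfC _ ⟨b, hb, fun i => le_refl (L (a i) b)⟩
    rwa [hf_eq] at h2
  have hsum : ∑ i, w i • L (a i) b = (∑ i, L (a i) b * lam i) / sl := by
    rw [Finset.sum_div]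
    exact Finset.sum_congr rfl fun i _ => by
      rw [hwdef, smul_eq_mul, div_mul_eq_mul_div, mul_comm]
  have hc_le : c ≤ ∑ i, w i • L (a i) b := by
    rw [hsum, le_div_iff₀ hslpos]
    linarith
  exact hc_le.trans hJ

theorem stmt19 {V W : Type*} [AddCommGroup V] [Module ℝ V]
    [AddCommGroup W] [Module ℝ W] [TopologicalSpace W] [T2Space W]
    (A : Set V) (B : Set W) (hA : Convex ℝ A) (hB : Convex ℝ B)
    (L : V → W → ℝ)
    (hconc : ∀ b ∈ B, ConcaveOn ℝ A fun a => L a b)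
    (hconv : ∀ a ∈ A, ConvexOn ℝ B (L a))
    (astar : V) (hastar : astar ∈ A) (Cstar : ℝ)
    (hCstar : (⨆ a ∈ A, ⨅ b ∈ B, (L a b : EReal)) < (Cstar : EReal))
    (hBstar_ne : {b ∈ B | L astar b ≤ Cstar}.Nonempty)
    (hBstar_cpt : IsCompact {b ∈ B | L astar b ≤ Cstar})
    (hlsc : ∀ a ∈ A, LowerSemicontinuousOn (L a) {b ∈ B | L astar b ≤ Cstar}) :
    (⨅ b ∈ B, ⨆ a ∈ A, (L a b : EReal)) = (⨆ a ∈ A, ⨅ b ∈ B, (L a b : EReal)) ∧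
    ∃ bbar ∈ B, (⨆ a ∈ A, (L a bbar : EReal)) = ⨅ b ∈ B, ⨆ a ∈ A, (L a b : EReal) := by
  classical
  set S : EReal := ⨆ a ∈ A, ⨅ b ∈ B, (L a b : EReal) with hSdef
  set Bs : Set W := {b ∈ B | L astar b ≤ Cstar} with hBsdef
  have hBne : B.Nonempty := hBstar_ne.mono fun b hb => hb.1
  have hBs_closed : IsClosed Bs := hBstar_cpt.isClosed
  -- family of closed sets indexed by (a, c) with a ∈ A, S < c
  set Z : {p : V × ℝ // p.1 ∈ A ∧ S < (p.2 : EReal)} → Set W :=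
    fun p => {b ∈ Bs | L p.1.1 b ≤ p.1.2} with hZdef
  have hZclosed : ∀ p, IsClosed (Z p) := fun p =>
    closed_sublevel hBs_closed (hlsc p.1.1 p.2.1) p.1.2
  have hfip : (Bs ∩ ⋂ p, Z p).Nonempty := by
    rw [Set.nonempty_iff_ne_empty]
    intro hempty
    obtain ⟨t, ht⟩ := hBstar_cpt.elim_finite_subfamily_closed Z hZclosed hempty
    set pstar : {p : V × ℝ // p.1 ∈ A ∧ S < (p.2 : EReal)} :=
      ⟨(astar, Cstar), hastar, hCstar⟩ with hpstardef
    set t' := insert pstar t with ht'def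
    have hpstar_mem : pstar ∈ t' := Finset.mem_insert_self _ _
    have ht'ne : t'.Nonempty := ⟨pstar, hpstar_mem⟩
    haveI : Nonempty {x // x ∈ t'} := ⟨⟨pstar, hpstar_mem⟩⟩
    set c : ℝ := t'.inf' ht'ne (fun p => p.1.2) with hcdef
    have hSc : S < (c : EReal) := by
      obtain ⟨p, hp, hpc⟩ := t'.exists_mem_eq_inf' ht'ne (fun p => p.1.2)
      rw [hcdef, hpc]
      exact p.2.2
    have hcle : ∀ p ∈ t', c ≤ p.1.2 := fun p hp => Finset.inf'_le _ hp
    rcases sep_core A B hA hB L hconc hconv (ι := {x // x ∈ t'})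
        (fun x => x.1.1.1) (fun x => x.1.2.1) c hBne with ⟨b, hb, hball⟩ | ⟨a₀, ha₀, hge⟩
    · have hbBs : b ∈ Bs := by
        refine ⟨hb, ?_⟩
        exact (hball ⟨pstar, hpstar_mem⟩).trans (hcle pstar hpstar_mem)
      have hbmem : b ∈ Bs ∩ ⋂ p ∈ t, Z p := by
        refine ⟨hbBs, Set.mem_iInter₂.mpr fun p hp => ?_⟩
        refine ⟨hbBs, ?_⟩
        exact (hball ⟨p, Finset.mem_insert_of_mem hp⟩).trans
          (hcle p (Finset.mem_insert_of_mem hp))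
      rw [ht] at hbmem
      exact hbmem
    · have h1 : (c : EReal) ≤ ⨅ b ∈ B, (L a₀ b : EReal) :=
        le_iInf₂ fun b hb => by exact_mod_cast hge b hb
      have h2 : (⨅ b ∈ B, (L a₀ b : EReal)) ≤ S :=
        le_iSup₂ (f := fun a _ => ⨅ b ∈ B, (L a b : EReal)) a₀ ha₀
      exact absurd (h1.trans h2) (not_le.mpr hSc)
  obtain ⟨bbar, hbBs, hbZ⟩ := hfip
  have hb_le : ∀ a ∈ A, (L a bbar : EReal) ≤ S := by
    intro a haA
    by_contra h
    push_neg at h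
    obtain ⟨r, hr1, hr2⟩ := EReal.exists_between_coe_real h
    have hmem : bbar ∈ Z ⟨(a, r), haA, hr1⟩ := Set.mem_iInter.mp hbZ _
    exact absurd hr2 (not_lt.2 (EReal.coe_le_coe_iff.mpr hmem.2))
  have h1 : S ≤ ⨅ b ∈ B, ⨆ a ∈ A, (L a b : EReal) := by
    refine iSup₂_le fun a haA => le_iInf₂ fun b hb => ?_
    exact le_trans (iInf₂_le b hb) (le_iSup₂ (f := fun a _ => (L a b : EReal)) a haA)
  have h2 : (⨆ a ∈ A, (L a bbar : EReal)) ≤ S := iSup₂_le hb_le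
  have h3 : (⨅ b ∈ B, ⨆ a ∈ A, (L a b : EReal)) ≤ ⨆ a ∈ A, (L a bbar : EReal) :=
    iInf₂_le bbar hbBs.1
  exact ⟨le_antisymm (h3.trans h2) h1, bbar, hbBs.1, le_antisymm (h2.trans h1) h3⟩
end
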